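/- arXiv:1909.08983 — 5 statements merged into one kernel-verified Lean document; each statement's English description precedes it below -/
import Mathlib

section
/- For every positive odd integer n, ∑_{m=0}^{n-1} (2m+1)·A_m = n² · ∑_{k=0}^{n-1} (1/(2k+1))·C(n−1,k)²·C(n+k,k)², where the right-hand side is a sum of rational numbers. -/
/-- The `n`-th Apéry number `A_n = ∑_{k=0}^n C(n+k,k)^2 C(n,k)^2`. -/
def apery (n : ℕ) : ℚ :=
  ∑ k ∈ Finset.range (n + 1), ((n + k).choose k : ℚ) ^ 2 * (n.choose k : ℚ) ^ 2

/-- The harmonic number of order `m`: `H_n^{(m)} = ∑_{k=1}^n 1/k^m`. -/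
def hsum (m n : ℕ) : ℚ := ∑ k ∈ Finset.Icc 1 n, 1 / (k : ℚ) ^ m

/-- The multiple harmonic sum `H(a,b;n) = ∑_{1 ≤ i < j ≤ n} 1/(i^a j^b)`. -/
def mhs2 (a b n : ℕ) : ℚ :=
  ∑ j ∈ Finset.Icc 1 n, ∑ i ∈ Finset.Ico 1 j, 1 / ((i : ℚ) ^ a * (j : ℚ) ^ b)

/-- The multiple harmonic sum `H(a,b,c;n) = ∑_{1 ≤ i < j < l ≤ n} 1/(i^a j^b l^c)`. -/
def mhs3 (a b c n : ℕ) : ℚ :=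
  ∑ l ∈ Finset.Icc 1 n, ∑ j ∈ Finset.Ico 1 l, ∑ i ∈ Finset.Ico 1 j,
    1 / ((i : ℚ) ^ a * (j : ℚ) ^ b * (l : ℚ) ^ c)

/-- `padicCongr p r x y` means `x ≡ y (mod p^r)` for rationals, i.e. the `p`-adic
valuation of `x - y` is at least `r` (equivalently, the `p`-adic norm of `x - y`
is at most `p^(-r)`). -/
def padicCongr (p : ℕ) [Fact p.Prime] (r : ℤ) (x y : ℚ) : Prop :=
  ‖((x - y : ℚ) : ℚ_[p])‖ ≤ (p : ℝ) ^ (-r)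

lemma term_key (n k : ℕ) (hk : k ≤ n) :
    ((n : ℚ) + 1) ^ 2 * (1 / (2 * (k : ℚ) + 1) * (n.choose k : ℚ) ^ 2 * ((n + 1 + k).choose k : ℚ) ^ 2)
      = (n : ℚ) ^ 2 * (1 / (2 * (k : ℚ) + 1) * ((n - 1).choose k : ℚ) ^ 2 * ((n + k).choose k : ℚ) ^ 2)
        + (2 * (n : ℚ) + 1) * (((n + k).choose k : ℚ) ^ 2 * (n.choose k : ℚ) ^ 2) := by
  have h1 : ((n : ℚ) + 1) * ((n + 1 + k).choose k : ℚ)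
      = ((n : ℚ) + (k : ℚ) + 1) * ((n + k).choose k : ℚ) := by
    have e := Nat.choose_mul_succ_eq (n + k) k
    have h2 : n + k + 1 - k = n + 1 := by omega
    rw [h2] at e
    have h3 : n + 1 + k = n + k + 1 := by omega
    rw [h3]
    have := congrArg (fun m : ℕ => (m : ℚ)) e
    push_cast at this
    linarith
  have h2 : (n : ℚ) * (((n - 1).choose k : ℚ))
      = ((n : ℚ) - (k : ℚ)) * (n.choose k : ℚ) := by
    rcases Nat.eq_zero_or_pos n with h | h
    · have hk0 : k = 0 := by omega
      subst h hk0; simp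
    · have e := Nat.choose_mul_succ_eq (n - 1) k
      have hn1 : n - 1 + 1 = n := by omega
      rw [hn1] at e
      have := congrArg (fun m : ℕ => (m : ℚ)) e
      push_cast [Nat.cast_sub hk] at this
      linarith
  have hk2 : (2 * (k : ℚ) + 1) ≠ 0 := by positivity
  field_simp
  linear_combination ((n.choose k : ℚ)^2 * (((n:ℚ)+1) * ((n + 1 + k).choose k : ℚ)
      + ((n:ℚ)+(k:ℚ)+1) * ((n + k).choose k : ℚ))) * h1
    - (((n + k).choose k : ℚ)^2 * ((n:ℚ) * ((n - 1).choose k : ℚ)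
      + ((n:ℚ)-(k:ℚ)) * (n.choose k : ℚ))) * h2

lemma main_id (n : ℕ) :
    ∑ m ∈ Finset.range n, (2 * (m : ℚ) + 1) * apery m
      = (n : ℚ) ^ 2 * ∑ k ∈ Finset.range n,
          1 / (2 * (k : ℚ) + 1) * ((n - 1).choose k : ℚ) ^ 2 * ((n + k).choose k : ℚ) ^ 2 := by
  induction n with
  | zero => simp
  | succ n ih =>
    rw [Finset.sum_range_succ, ih]
    rw [Finset.mul_sum, Finset.mul_sum]
    have hsimp : (n + 1 - 1 : ℕ) = n := rfl
    rw [hsimp]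
    have hext : ∑ k ∈ Finset.range n,
        (n : ℚ) ^ 2 * (1 / (2 * (k : ℚ) + 1) * ((n - 1).choose k : ℚ) ^ 2 * ((n + k).choose k : ℚ) ^ 2)
        = ∑ k ∈ Finset.range (n + 1),
        (n : ℚ) ^ 2 * (1 / (2 * (k : ℚ) + 1) * ((n - 1).choose k : ℚ) ^ 2 * ((n + k).choose k : ℚ) ^ 2) := by
      rw [Finset.sum_range_succ]
      rcases Nat.eq_zero_or_pos n with h | h
      · subst h; simp
      · have : (n - 1).choose n = 0 := Nat.choose_eq_zero_of_lt (by omega)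
        rw [this]
        push_cast
        ring
    rw [hext]
    unfold apery
    rw [Finset.mul_sum, ← Finset.sum_add_distrib]
    apply Finset.sum_congr rfl
    intro k hk
    have hk' : k ≤ n := by
      have := Finset.mem_range.mp hk; omega
    have := term_key n k hk'
    push_cast
    push_cast at this
    linarith

theorem stmt6 (n : ℕ) (hn : 0 < n) (hodd : Odd n) :
    ∑ m ∈ Finset.range n, (2 * (m : ℚ) + 1) * apery m
      = (n : ℚ) ^ 2 * ∑ k ∈ Finset.range n,
          1 / (2 * (k : ℚ) + 1) * ((n - 1).choose k : ℚ) ^ 2 * ((n + k).choose k : ℚ) ^ 2 := by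
  exact main_id n
end

section
/- Let p ≥ 7 be a prime. Then ∑_{k=0}^{p-1} 1/(2k+1) ≡ 1/p − 2p·(H_{p-1}^{(2)} − (1/4)·H_{(p-1)/2}^{(2)}) + (1/2)·p²·H_{(p-1)/2}^{(3)} (mod p⁴), where the congruence of rational numbers means the p-adic valuation of the difference is at least 4. -/
open Finset
lemma interleave {M : Type*} [AddCommMonoid M] (f : ℕ → M) (n : ℕ) :
    ∑ k ∈ range n, f (2*k+1) + ∑ k ∈ range n, f (2*k+2) = ∑ m ∈ range (2*n), f (m+1) := by
  induction n with
  | zero => simp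
  | succ n ih =>
    rw [sum_range_succ, sum_range_succ, show 2*(n+1) = (2*n+1)+1 by ring, sum_range_succ,
      sum_range_succ, ← ih, show 2*n+1+1 = 2*n+2 by ring]
    abel

lemma Icc_shift' {M : Type*} [AddCommMonoid M] (f : ℕ → M) (n : ℕ) :
    ∑ k ∈ Finset.Icc 1 n, f k = ∑ k ∈ range n, f (k+1) := by
  rw [← Finset.Ico_add_one_right_eq_Icc, Finset.sum_Ico_eq_sum_range]
  simp [add_comm]

section padic
variable {p : ℕ} [hp : Fact p.Prime]

lemma zmod_sum_pow {e : ℕ} (h0 : 0 < e) (h : e < p - 1) :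
    ∑ k ∈ Icc 1 (p-1), ((k : ZMod p))^e = 0 := by
  haveI : NeZero p := ⟨hp.out.ne_zero⟩
  have huniv : ∑ k ∈ range p, ((k : ZMod p))^e = ∑ x : ZMod p, x^e := by
    exact Finset.sum_nbij' (fun k => (k : ZMod p)) (fun x => x.val)
      (fun a _ => mem_univ _) (fun x _ => mem_range.2 (ZMod.val_lt x))
      (fun a ha => ZMod.val_natCast_of_lt (mem_range.1 ha))
      (fun x _ => ZMod.natCast_rightInverse x) (fun a _ => rfl)
  have hzero : ∑ x : ZMod p, x^e = 0 := by
    have := FiniteField.sum_pow_lt_card_sub_one (ZMod p) e (by rwa [ZMod.card])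
    exact this
  have hp1 : p = (p-1)+1 := by omega
  have hsplit : ∑ k ∈ range ((p-1)+1), ((k : ZMod p))^e
      = ∑ k ∈ range (p-1), (((k+1 : ℕ) : ZMod p))^e + (((0:ℕ) : ZMod p))^e :=
    Finset.sum_range_succ' _ _
  rw [Icc_shift']
  rw [← hp1] at hsplit
  have h00 : (((0:ℕ) : ZMod p))^e = 0 := by
    norm_num [zero_pow h0.ne']
  rw [hsplit, h00, add_zero] at huniv
  rw [huniv, hzero]

lemma zmod_odd_sum {n e : ℕ} (hn : p = 2*n+1) (h0 : 0 < e) (he : Even e) (h : e < p - 1) :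
    ∑ k ∈ range n, (((2*k+1 : ℕ) : ZMod p))^e = 0 := by
  haveI : NeZero p := ⟨hp.out.ne_zero⟩
  set A := ∑ k ∈ range n, (((2*k+1 : ℕ) : ZMod p))^e with hA
  set B := ∑ k ∈ range n, (((2*k+2 : ℕ) : ZMod p))^e with hB
  have hAB : A + B = 0 := by
    have hi := interleave (M := ZMod p) (fun m => ((m : ZMod p))^e) n
    rw [hA, hB, hi]
    have h2n : 2*n = p - 1 := by omega
    rw [h2n]
    have hz := zmod_sum_pow (p := p) h0 h
    rwa [Icc_shift'] at hz
  have hrefl : A = B := by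
    rw [hA, ← Finset.sum_range_reflect]
    apply Finset.sum_congr rfl
    intro k hk
    have hk' : k < n := mem_range.1 hk
    have h1 : 2*(n-1-k)+1 = p - (2*k+2) := by omega
    have h2 : 2*k+2 ≤ p := by omega
    rw [h1, Nat.cast_sub h2]
    rw [ZMod.natCast_self, zero_sub, he.neg_pow]
  have h2A : A + A = 0 := by rw [hrefl] at hAB ⊢; exact hAB
  have h2ne : (2 : ZMod p) ≠ 0 := by
    have hnd : ¬ (p ∣ 2) := fun hd => by
      have := Nat.le_of_dvd (by norm_num) hd
      omega
    intro hh
    exact hnd ((ZMod.natCast_eq_zero_iff 2 p).1 (by exact_mod_cast hh))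
  have hmul : (2 : ZMod p) * A = 0 := by rw [two_mul]; exact h2A
  rcases mul_eq_zero.1 hmul with h' | h'
  · exact absurd h' h2ne
  · exact h'

lemma norm_nat_le_one (m : ℕ) : ‖(m : ℚ_[p])‖ ≤ 1 := by
  have := Padic.norm_int_le_one (p := p) (m : ℤ)
  simpa using this

lemma norm_nat_unit {m : ℕ} (h : ¬ p ∣ m) : ‖(m : ℚ_[p])‖ = 1 := by
  refine le_antisymm (norm_nat_le_one m) ?_
  by_contra hlt
  push_neg at hlt
  have h2 : ‖((m : ℤ) : ℚ_[p])‖ < 1 := by simpa using hlt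
  rw [Padic.norm_intCast_lt_one_iff] at h2
  exact h (by exact_mod_cast h2)

lemma norm_int_zmod {z : ℤ} (h : (z : ZMod p) = 0) : ‖(z : ℚ_[p])‖ ≤ (p:ℝ)⁻¹ := by
  have hd : ((p:ℤ))^1 ∣ z := by
    rw [pow_one]
    exact_mod_cast (ZMod.intCast_zmod_eq_zero_iff_dvd z p).1 h
  have := (Padic.norm_int_le_pow_iff_dvd (p := p) z 1).2 hd
  simpa using this

lemma ultra_sum_le {s : Finset ℕ} {f : ℕ → ℚ_[p]} {C : ℝ} (hC : 0 ≤ C)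
    (h : ∀ i ∈ s, ‖f i‖ ≤ C) : ‖∑ i ∈ s, f i‖ ≤ C :=
  IsUltrametricDist.norm_sum_le_of_forall_le_of_nonneg hC h

lemma fermat_term (hp7 : 7 ≤ p) {m : ℕ} (hm : ¬ p ∣ m) :
    ‖(1 / ((m:ℚ_[p]))^4 - ((m^(p-5) : ℕ) : ℚ_[p]))‖ ≤ (p:ℝ)⁻¹ := by
  have hp2 := hp.out.two_le
  have hmu : ‖(m : ℚ_[p])‖ = 1 := norm_nat_unit hm
  have hm0 : (m : ℚ_[p]) ≠ 0 := by
    intro hz; rw [hz] at hmu; simp at hmu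
  have key : 1 / ((m:ℚ_[p]))^4 - ((m^(p-5) : ℕ) : ℚ_[p])
      = (1 - ((m:ℚ_[p]))^(p-1)) / ((m:ℚ_[p]))^4 := by
    push_cast
    field_simp
    rw [← pow_add]
    congr 2
    omega
  rw [key, norm_div, norm_pow, hmu, one_pow, div_one]
  have hcast : (1 - ((m:ℚ_[p]))^(p-1)) = (((1 - (m:ℤ)^(p-1)) : ℤ) : ℚ_[p]) := by
    push_cast; ring
  rw [hcast]
  apply norm_int_zmod
  have hmz : ((m : ℤ) : ZMod p) ≠ 0 := by
    rw [Int.cast_natCast, Ne, ZMod.natCast_eq_zero_iff]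
    exact hm
  push_cast
  rw [ZMod.pow_card_sub_one_eq_one (by exact_mod_cast hmz : ((m:ℕ) : ZMod p) ≠ 0)]
  ring

lemma norm_inv4_sum (hp7 : 7 ≤ p) {s : Finset ℕ} {g : ℕ → ℕ} (hg : ∀ k ∈ s, ¬ p ∣ g k)
    (hz : (∑ k ∈ s, ((g k : ZMod p))^(p-5)) = 0) :
    ‖∑ k ∈ s, 1/((g k : ℚ_[p]))^4‖ ≤ (p:ℝ)⁻¹ := by
  have hpinv : (0:ℝ) ≤ (p:ℝ)⁻¹ := by positivity
  have hdecomp : ∑ k ∈ s, 1/((g k : ℚ_[p]))^4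
      = (∑ k ∈ s, (1/((g k : ℚ_[p]))^4 - (((g k)^(p-5) : ℕ) : ℚ_[p])))
        + ∑ k ∈ s, (((g k)^(p-5) : ℕ) : ℚ_[p]) := by
    rw [← Finset.sum_add_distrib]
    apply Finset.sum_congr rfl
    intro k _; ring
  rw [hdecomp]
  refine le_trans (Padic.nonarchimedean _ _) (max_le ?_ ?_)
  · exact ultra_sum_le hpinv (fun k hk => fermat_term hp7 (hg k hk))
  · have hNcast : ∑ k ∈ s, (((g k)^(p-5) : ℕ) : ℚ_[p])
        = (((∑ k ∈ s, (g k)^(p-5) : ℕ) : ℤ) : ℚ_[p]) := by push_cast; ring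
    rw [hNcast]
    apply norm_int_zmod
    push_cast
    exact hz


end padic


section bounds
variable {p : ℕ} [hp : Fact p.Prime]

lemma cast_hsum (j n : ℕ) : ((hsum j n : ℚ) : ℚ_[p]) = ∑ k ∈ Icc 1 n, 1/((k:ℚ_[p]))^j := by
  rw [hsum]
  push_cast
  rfl

lemma norm_hsum4 (hp7 : 7 ≤ p) : ‖((hsum 4 (p-1) : ℚ) : ℚ_[p])‖ ≤ (p:ℝ)⁻¹ := by
  rw [cast_hsum]
  refine norm_inv4_sum hp7 (g := id) (fun k hk => ?_) ?_
  · simp only [id]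
    have := mem_Icc.1 hk
    intro hd
    have := Nat.le_of_dvd (by omega) hd
    omega
  · simp only [id]
    exact zmod_sum_pow (by omega) (by omega)

lemma norm_odd4 (hp7 : 7 ≤ p) {n : ℕ} (hn : p = 2*n+1) :
    ‖∑ k ∈ range n, 1/(((2*k+1 : ℕ) : ℚ_[p]))^4‖ ≤ (p:ℝ)⁻¹ := by
  refine norm_inv4_sum hp7 (g := fun k => 2*k+1) (fun k hk => ?_) ?_
  · have := mem_range.1 hk
    intro hd
    have hd' : p ∣ 2*k+1 := hd
    have := Nat.le_of_dvd (by omega) hd'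
    omega
  · show ∑ k ∈ range n, (((2*k+1:ℕ) : ZMod p))^(p-5) = 0
    refine zmod_odd_sum hn (by omega) ?_ (by omega)
    have : Odd p := hp.out.odd_of_ne_two (by omega)
    rcases this with ⟨t, ht⟩
    exact ⟨t-2, by omega⟩
end bounds

lemma cube_pair_identity {K : Type*} [Field K] (q x y : K) (hx : x ≠ 0) (hy : y ≠ 0)
    (hq : x + y = q) :
    1/x^3 + 1/y^3 = -3*q*(1/x^4) + q^2*((6*x^2 - 8*q*x + 3*q^2)/(x^4*y^3)) := by
  subst hq
  field_simp
  ring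

section hsum3
variable {p : ℕ} [hp : Fact p.Prime]

lemma norm_hsum3 (hp7 : 7 ≤ p) : ‖((hsum 3 (p-1) : ℚ) : ℚ_[p])‖ ≤ ((p:ℝ)⁻¹)^2 := by
  have hp2 := hp.out.two_le
  set a : ℕ → ℚ_[p] := fun k => ((k+1 : ℕ) : ℚ_[p]) with ha
  set b : ℕ → ℚ_[p] := fun k => ((p-1-k : ℕ) : ℚ_[p]) with hb
  have hH3 : ((hsum 3 (p-1) : ℚ) : ℚ_[p]) = ∑ k ∈ range (p-1), 1/(a k)^3 := by
    rw [cast_hsum, Icc_shift']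
  have hanz : ∀ k, k ∈ range (p-1) → ¬ p ∣ (k+1) := by
    intro k hk hd
    have := mem_range.1 hk
    have := Nat.le_of_dvd (by omega) hd
    omega
  have hbnz : ∀ k, k ∈ range (p-1) → ¬ p ∣ (p-1-k) := by
    intro k hk hd
    have := mem_range.1 hk
    have := Nat.le_of_dvd (by omega) hd
    omega
  have hrefl : ∑ k ∈ range (p-1), 1/(a k)^3 = ∑ k ∈ range (p-1), 1/(b k)^3 := by
    rw [← Finset.sum_range_reflect (fun k => 1/(b k)^3) (p-1)]
    apply sum_congr rfl
    intro k hk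
    have hk' := mem_range.1 hk
    have : a k = b (p-1-1-k) := by
      simp only [ha, hb]
      exact congrArg _ (by omega)
    rw [this]
  have hkey : ∀ k ∈ range (p-1), 1/(a k)^3 + 1/(b k)^3
      = -3*(p:ℚ_[p])*(1/(a k)^4)
        + (p:ℚ_[p])^2 * ((6*(a k)^2 - 8*(p:ℚ_[p])*(a k) + 3*(p:ℚ_[p])^2)/((a k)^4*(b k)^3)) := by
    intro k hk
    have hk' := mem_range.1 hk
    have hane : a k ≠ 0 := Nat.cast_ne_zero.2 (by omega)
    have hbne : b k ≠ 0 := Nat.cast_ne_zero.2 (by omega)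
    have hqsum : a k + b k = (p:ℚ_[p]) := by
      simp only [ha, hb]
      rw [← Nat.cast_add]
      exact congrArg _ (by omega)
    exact cube_pair_identity _ _ _ hane hbne hqsum
  have h2H3 : (2:ℚ_[p]) * ((hsum 3 (p-1) : ℚ) : ℚ_[p])
      = -3*(p:ℚ_[p]) * (∑ k ∈ range (p-1), 1/(a k)^4)
        + (p:ℚ_[p])^2 * ∑ k ∈ range (p-1),
            ((6*(a k)^2 - 8*(p:ℚ_[p])*(a k) + 3*(p:ℚ_[p])^2)/((a k)^4*(b k)^3)) := by
    have e1 : (2:ℚ_[p]) * ((hsum 3 (p-1) : ℚ) : ℚ_[p])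
        = ∑ k ∈ range (p-1), (1/(a k)^3 + 1/(b k)^3) := by
      rw [sum_add_distrib, ← hH3, ← hrefl, ← hH3, two_mul]
    rw [e1, Finset.sum_congr rfl hkey, sum_add_distrib, ← Finset.mul_sum, ← Finset.mul_sum]
  have hH4 : ∑ k ∈ range (p-1), 1/(a k)^4 = ((hsum 4 (p-1) : ℚ) : ℚ_[p]) := by
    rw [cast_hsum, Icc_shift']
  have hC : ‖∑ k ∈ range (p-1),
      ((6*(a k)^2 - 8*(p:ℚ_[p])*(a k) + 3*(p:ℚ_[p])^2)/((a k)^4*(b k)^3))‖ ≤ 1 := by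
    apply ultra_sum_le zero_le_one
    intro k hk
    rw [norm_div]
    have hnum : (6*(a k)^2 - 8*(p:ℚ_[p])*(a k) + 3*(p:ℚ_[p])^2)
        = (((6*(k+1)^2 - 8*(p:ℤ)*(k+1) + 3*(p:ℤ)^2) : ℤ) : ℚ_[p]) := by
      simp only [ha]
      push_cast
      ring
    have hden : ‖(a k)^4*(b k)^3‖ = 1 := by
      rw [norm_mul, norm_pow, norm_pow]
      simp only [ha, hb]
      rw [norm_nat_unit (hanz k hk), norm_nat_unit (hbnz k hk)]
      norm_num
    rw [hnum, hden, div_one]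
    exact Padic.norm_int_le_one _
  have hnormp : ‖(p:ℚ_[p])‖ = (p:ℝ)⁻¹ := Padic.norm_p
  have hbound : ‖(2:ℚ_[p]) * ((hsum 3 (p-1) : ℚ) : ℚ_[p])‖ ≤ ((p:ℝ)⁻¹)^2 := by
    rw [h2H3]
    refine le_trans (Padic.nonarchimedean _ _) (max_le ?_ ?_)
    · rw [norm_mul, hH4]
      have h3p : ‖(-3 : ℚ_[p])*(p:ℚ_[p])‖ ≤ (p:ℝ)⁻¹ := by
        rw [norm_mul, norm_neg, hnormp]
        have h3 : ‖(3:ℚ_[p])‖ ≤ 1 := by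
          have := norm_nat_le_one (p := p) 3
          simpa using this
        calc ‖(3:ℚ_[p])‖ * (p:ℝ)⁻¹ ≤ 1 * (p:ℝ)⁻¹ :=
              mul_le_mul_of_nonneg_right h3 (by positivity)
          _ = (p:ℝ)⁻¹ := one_mul _
      calc ‖(-3:ℚ_[p])*(p:ℚ_[p])‖ * ‖((hsum 4 (p-1):ℚ) : ℚ_[p])‖
          ≤ (p:ℝ)⁻¹ * (p:ℝ)⁻¹ := by
            apply mul_le_mul h3p (norm_hsum4 hp7) (norm_nonneg _) (by positivity)
        _ = ((p:ℝ)⁻¹)^2 := by ring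
    · rw [norm_mul, norm_pow, hnormp]
      calc ((p:ℝ)⁻¹)^2 * ‖∑ k ∈ range (p-1),
            ((6*(a k)^2 - 8*(p:ℚ_[p])*(a k) + 3*(p:ℚ_[p])^2)/((a k)^4*(b k)^3))‖
          ≤ ((p:ℝ)⁻¹)^2 * 1 := by
            apply mul_le_mul_of_nonneg_left hC (by positivity)
        _ = ((p:ℝ)⁻¹)^2 := by ring
  have h2u : ‖(2:ℚ_[p])‖ = 1 := by
    have : ¬ p ∣ 2 := fun hd => by have := Nat.le_of_dvd (by norm_num) hd; omega
    have := norm_nat_unit (p := p) this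
    simpa using this
  rwa [norm_mul, h2u, one_mul] at hbound
end hsum3

lemma geom_expand {K : Type*} [Field K] (m q : K) (hm : m ≠ 0) (h2 : 2*q - m ≠ 0) :
    1/m + 1/(2*q-m) = (-2*q)*(1/m^2) + (-4*q^2)*(1/m^3) + (-8*q^3)*(1/m^4)
      + 16*q^4/(m^4*(2*q-m)) := by
  rw [div_add_div _ _ hm h2]
  rw [show (-2*q)*(1/m^2) + (-4*q^2)*(1/m^3) + (-8*q^3)*(1/m^4) + 16*q^4/(m^4*(2*q-m))
      = -2*q/m^2 - 4*q^2/m^3 - 8*q^3/m^4 + 16*q^4/(m^4*(2*q-m)) by ring]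
  rw [div_sub_div _ _ (pow_ne_zero 2 hm) (pow_ne_zero 3 hm),
    div_sub_div _ _ (mul_ne_zero (pow_ne_zero 2 hm) (pow_ne_zero 3 hm)) (pow_ne_zero 4 hm),
    div_add_div _ _ (mul_ne_zero (mul_ne_zero (pow_ne_zero 2 hm) (pow_ne_zero 3 hm))
      (pow_ne_zero 4 hm)) (mul_ne_zero (pow_ne_zero 4 hm) h2),
    div_eq_div_iff (mul_ne_zero hm h2) (mul_ne_zero (mul_ne_zero (mul_ne_zero (pow_ne_zero 2 hm)
      (pow_ne_zero 3 hm)) (pow_ne_zero 4 hm)) (mul_ne_zero (pow_ne_zero 4 hm) h2))]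
  ring

section oddsum
variable {p : ℕ} [hp : Fact p.Prime]

/-- odd sum in terms of hsums, in `ℚ_[p]`. -/
lemma odd_hsum {n : ℕ} (hn : p = 2*n+1) (j : ℕ) :
    ∑ k ∈ range n, 1/(((2*k+1:ℕ) : ℚ_[p]))^j
      = ((hsum j (p-1) : ℚ) : ℚ_[p]) - (1/(2:ℚ_[p])^j) * ((hsum j n : ℚ) : ℚ_[p]) := by
  have hi := interleave (M := ℚ_[p]) (fun m => 1/((m : ℚ_[p]))^j) n
  have heven : ∑ k ∈ range n, 1/(((2*k+2:ℕ) : ℚ_[p]))^j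
      = (1/(2:ℚ_[p])^j) * ((hsum j n : ℚ) : ℚ_[p]) := by
    rw [cast_hsum, Icc_shift', Finset.mul_sum]
    apply sum_congr rfl
    intro k _
    have h2 : ((2*k+2:ℕ) : ℚ_[p]) = 2*((k+1:ℕ) : ℚ_[p]) := by push_cast; ring
    rw [h2, mul_pow, ← one_div_mul_one_div]
  have h2n : 2*n = p-1 := by omega
  have hfull : ∑ m ∈ range (2*n), 1/(((m+1:ℕ) : ℚ_[p]))^j = ((hsum j (p-1) : ℚ) : ℚ_[p]) := by
    rw [h2n, cast_hsum, Icc_shift']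
  push_cast at hi heven hfull ⊢
  linear_combination hi - heven + hfull
end oddsum

theorem stmt7 (p : ℕ) [Fact p.Prime] (hp : 7 ≤ p) :
    padicCongr p 4 (∑ k ∈ Finset.range p, 1 / (2 * (k : ℚ) + 1))
      (1 / (p : ℚ) - 2 * (p : ℚ) * (hsum 2 (p - 1) - 1 / 4 * hsum 2 ((p - 1) / 2))
        + 1 / 2 * (p : ℚ) ^ 2 * hsum 3 ((p - 1) / 2)) := by
  have hpp : p.Prime := Fact.out
  have hodd : p % 2 = 1 := Nat.odd_iff.1 (hpp.odd_of_ne_two (by omega))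
  set n := (p - 1) / 2 with hn0
  have hn : p = 2*n+1 := by omega
  set K := ℚ_[p]
  set P : K := (p : K) with hPdef
  set M : ℕ → K := fun k => ((2*k+1 : ℕ) : K) with hM
  have hP2n : P = 2*(n:K)+1 := by rw [hPdef]; simp only [K]; exact_mod_cast congrArg (Nat.cast (R := K)) hn
  have hMne : ∀ k, M k ≠ 0 := fun k => Nat.cast_ne_zero.2 (by omega)
  have hW : ∀ k ∈ range n, 2*P - M k = ((2*p-(2*k+1) : ℕ) : K) := by
    intro k hk
    have hk' := mem_range.1 hk
    rw [hM, hPdef, Nat.cast_sub (by omega)]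
    simp only [K]; push_cast
    ring
  have hWne : ∀ k ∈ range n, 2*P - M k ≠ 0 := by
    intro k hk
    rw [hW k hk]
    have := mem_range.1 hk
    exact Nat.cast_ne_zero.2 (by omega)
  -- the split of the main sum
  set G : ℕ → K := fun k => 1/(2*(k:K)+1) with hG
  have e1 : ∑ k ∈ range (2*n+1), G k = ∑ k ∈ range n, G k + ∑ i ∈ range (n+1), G (n+i) := by
    rw [← Finset.sum_range_add_sum_Ico G (show n ≤ 2*n+1 by omega),
      Finset.sum_Ico_eq_sum_range]
    simp only [show 2*n+1-n = n+1 from by omega]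
  have e2 : ∑ i ∈ range (n+1), G (n+i) = G n + ∑ i ∈ range n, G (n+(i+1)) := by
    rw [Finset.sum_range_succ']
    rw [add_comm, Nat.add_zero]
  have e3 : ∑ i ∈ range n, G (n+(i+1)) = ∑ k ∈ range n, 1/(2*P - M k) := by
    rw [← Finset.sum_range_reflect (fun i => G (n+(i+1))) n]
    apply sum_congr rfl
    intro k hk
    have hk' := mem_range.1 hk
    have hidx : n+((n-1-k)+1) = 2*n-k := by omega
    show G (n+((n-1-k)+1)) = 1/(2*P - M k)
    rw [hidx, hG]
    show 1/(2*((2*n-k:ℕ):K)+1) = 1/(2*P - M k)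
    congr 1
    rw [Nat.cast_sub (by omega : k ≤ 2*n), hW k hk, Nat.cast_sub (by omega : 2*k+1 ≤ 2*p)]
    have h2p : ((2*p:ℕ):K) = 2*P := by rw [hPdef]; simp only [K]; push_cast; ring
    rw [h2p, hP2n]
    simp only [K]; push_cast
    ring
  have eG : ∀ k, G k = 1/(M k) := by
    intro k
    rw [hG, hM]
    show 1/(2*(k:K)+1) = 1/(((2*k+1:ℕ)):K)
    congr 1
    simp only [K]; push_cast
    ring
  have eGn : G n = 1/P := by
    rw [eG, hM]
    show 1/(((2*n+1:ℕ)):K) = 1/P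
    rw [hP2n]
    simp only [K]; push_cast
    ring_nf
  have hterm : ∀ k ∈ range n, 1/(M k) + 1/(2*P - M k)
      = (-2*P)*(1/(M k)^2) + (-4*P^2)*(1/(M k)^3) + (-8*P^3)*(1/(M k)^4)
        + 16*P^4/((M k)^4*(2*P - M k)) := by
    intro k hk
    exact geom_expand (M k) P (hMne k) (hWne k hk)
  have hmain : ∑ k ∈ range p, G k
      = 1/P + ((-2*P) * ∑ k ∈ range n, 1/(M k)^2 + (-4*P^2) * ∑ k ∈ range n, 1/(M k)^3
        + (-8*P^3) * ∑ k ∈ range n, 1/(M k)^4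
        + ∑ k ∈ range n, 16*P^4/((M k)^4*(2*P - M k))) := by
    calc ∑ k ∈ range p, G k = ∑ k ∈ range (2*n+1), G k := by rw [← hn]
      _ = ∑ k ∈ range n, G k + (G n + ∑ i ∈ range n, G (n+(i+1))) := by rw [e1, e2]
      _ = 1/P + (∑ k ∈ range n, 1/(M k) + ∑ k ∈ range n, 1/(2*P - M k)) := by
          rw [e3, eGn, Finset.sum_congr rfl (fun k _ => eG k)]
          ring
      _ = 1/P + ∑ k ∈ range n, (1/(M k) + 1/(2*P - M k)) := by rw [Finset.sum_add_distrib]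
      _ = 1/P + ∑ k ∈ range n, ((-2*P)*(1/(M k)^2) + (-4*P^2)*(1/(M k)^3)
            + (-8*P^3)*(1/(M k)^4) + 16*P^4/((M k)^4*(2*P - M k))) := by
          rw [Finset.sum_congr rfl hterm]
      _ = _ := by
          rw [Finset.sum_add_distrib, Finset.sum_add_distrib, Finset.sum_add_distrib,
            ← Finset.mul_sum, ← Finset.mul_sum, ← Finset.mul_sum]
  -- continue
  unfold padicCongr
  set O4 := ∑ k ∈ range n, 1/(M k)^4 with hO4def
  set R := ∑ k ∈ range n, 16*P^4/((M k)^4*(2*P - M k)) with hRdef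
  have hO2 : ∑ k ∈ range n, 1/(M k)^2
      = ((hsum 2 (p-1) : ℚ) : K) - (1/(2:K)^2) * ((hsum 2 n : ℚ) : K) := by
    rw [hM]; exact odd_hsum hn 2
  have hO3 : ∑ k ∈ range n, 1/(M k)^3
      = ((hsum 3 (p-1) : ℚ) : K) - (1/(2:K)^3) * ((hsum 3 n : ℚ) : K) := by
    rw [hM]; exact odd_hsum hn 3
  have hgoal : ((((∑ k ∈ Finset.range p, 1 / (2 * (k : ℚ) + 1))
        - (1 / (p : ℚ) - 2 * (p : ℚ) * (hsum 2 (p - 1) - 1 / 4 * hsum 2 n)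
          + 1 / 2 * (p : ℚ) ^ 2 * hsum 3 n)) : ℚ) : K)
      = -(4*P^2*((hsum 3 (p-1) : ℚ) : K)) + (-(8*P^3*O4) + R) := by
    have hS : ((∑ k ∈ Finset.range p, 1 / (2 * (k : ℚ) + 1) : ℚ) : K) = ∑ k ∈ range p, G k := by
      push_cast
      rw [hG]
    have hY : ((1 / (p : ℚ) - 2 * (p : ℚ) * (hsum 2 (p - 1) - 1 / 4 * hsum 2 n)
          + 1 / 2 * (p : ℚ) ^ 2 * hsum 3 n : ℚ) : K)
        = 1/P - 2*P*(((hsum 2 (p-1):ℚ):K) - 1/4 * ((hsum 2 n:ℚ):K))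
          + 1/2*P^2*((hsum 3 n:ℚ):K) := by
      rw [hPdef]; push_cast; ring
    rw [Rat.cast_sub, hS, hmain, hY, hO2, hO3]
    ring
  rw [hgoal]
  set t := (p:ℝ)⁻¹ with htdef
  have ht0 : 0 ≤ t := by positivity
  have hnp : ‖P‖ = t := by rw [hPdef, htdef]; exact Padic.norm_p
  have hMnorm : ∀ k ∈ range n, ‖M k‖ = 1 := by
    intro k hk
    have hk' := mem_range.1 hk
    rw [hM]
    exact norm_nat_unit (fun hd => by have := Nat.le_of_dvd (by omega) hd; omega)
  have hWnorm : ∀ k ∈ range n, ‖2*P - M k‖ = 1 := by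
    intro k hk
    have hk' := mem_range.1 hk
    rw [hW k hk]
    refine norm_nat_unit (fun hd => ?_)
    have h2p : p ∣ 2*p := ⟨2, by ring⟩
    have hdd := Nat.dvd_sub h2p hd
    have heq : 2*p - (2*p - (2*k+1)) = 2*k+1 := by omega
    rw [heq] at hdd
    have := Nat.le_of_dvd (by omega) hdd
    omega
  have ht : (↑p : ℝ)^(-(4:ℤ)) = t^4 := by
    rw [htdef, show ((4:ℤ)) = ((4:ℕ):ℤ) by norm_num, zpow_neg, zpow_natCast, ← inv_pow]
  have b1 : ‖-(4*P^2*((hsum 3 (p-1) : ℚ) : K))‖ ≤ t^4 := by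
    rw [norm_neg, norm_mul, norm_mul, norm_pow, hnp]
    have h4 : ‖(4:K)‖ ≤ 1 := by simpa using norm_nat_le_one (p := p) 4
    have h3 := norm_hsum3 (p := p) (by omega)
    rw [← htdef] at h3
    calc ‖(4:K)‖ * t^2 * ‖((hsum 3 (p-1):ℚ):K)‖ ≤ 1 * t^2 * t^2 := by
          apply mul_le_mul (mul_le_mul_of_nonneg_right h4 (by positivity)) h3 (norm_nonneg _)
            (by positivity)
      _ = t^4 := by ring
  have b2 : ‖-(8*P^3*O4)‖ ≤ t^4 := by
    rw [norm_neg, norm_mul, norm_mul, norm_pow, hnp]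
    have h8 : ‖(8:K)‖ ≤ 1 := by simpa using norm_nat_le_one (p := p) 8
    have hO4n : ‖O4‖ ≤ t := by
      have hh := norm_odd4 (p := p) (by omega) hn
      rw [← htdef] at hh
      rw [hO4def, hM]
      exact hh
    calc ‖(8:K)‖ * t^3 * ‖O4‖ ≤ 1 * t^3 * t := by
          apply mul_le_mul (mul_le_mul_of_nonneg_right h8 (by positivity)) hO4n (norm_nonneg _)
            (by positivity)
      _ = t^4 := by ring
  have b3 : ‖R‖ ≤ t^4 := by
    rw [hRdef]
    apply ultra_sum_le (by positivity)
    intro k hk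
    rw [norm_div, norm_mul, norm_mul, norm_pow, norm_pow, hnp, hMnorm k hk, hWnorm k hk]
    have h16 : ‖(16:K)‖ ≤ 1 := by simpa using norm_nat_le_one (p := p) 16
    calc ‖(16:K)‖*t^4/(1^4*1) = ‖(16:K)‖*t^4 := by ring
      _ ≤ 1*t^4 := mul_le_mul_of_nonneg_right h16 (by positivity)
      _ = t^4 := one_mul _
  rw [ht]
  exact le_trans (Padic.nonarchimedean _ _)
    (max_le b1 (le_trans (Padic.nonarchimedean _ _) (max_le b2 b3)))
end

section
/- Let p ≥ 7 be a prime. Then ∑_{k=1}^{p-1} H(2,2;k)/k ≡ −(1/2)·B_{p-5} (mod p), where the congruence of rational numbers means the p-adic valuation of the difference is at least 1. -/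
open Finset

namespace St9

variable {p : ℕ} [hpf : Fact p.Prime]

/-- congruence mod p in ℚ_p -/
def Cg (p : ℕ) [Fact p.Prime] (x y : ℚ_[p]) : Prop := ‖x - y‖ ≤ (p:ℝ)⁻¹

lemma p_pos : 0 < (p:ℝ) := by exact_mod_cast hpf.out.pos

lemma p_inv_le_one : (p:ℝ)⁻¹ ≤ 1 := by
  rw [inv_le_one_iff₀]; right; exact_mod_cast hpf.out.one_lt.le

lemma p_inv_nonneg : 0 ≤ (p:ℝ)⁻¹ := by positivity

lemma cg_refl (x : ℚ_[p]) : Cg p x x := by simp [Cg, p_inv_nonneg]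

lemma cg_symm {x y : ℚ_[p]} (h : Cg p x y) : Cg p y x := by
  unfold Cg at *; rwa [← norm_neg, neg_sub]

lemma cg_trans {x y z : ℚ_[p]} (h1 : Cg p x y) (h2 : Cg p y z) : Cg p x z := by
  unfold Cg at *
  have : x - z = (x - y) + (y - z) := by ring
  rw [this]
  exact le_trans (Padic.nonarchimedean _ _) (max_le h1 h2)

lemma cg_add {a b c d : ℚ_[p]} (h1 : Cg p a b) (h2 : Cg p c d) : Cg p (a + c) (b + d) := by
  unfold Cg at *
  have : a + c - (b + d) = (a - b) + (c - d) := by ring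
  rw [this]
  exact le_trans (Padic.nonarchimedean _ _) (max_le h1 h2)

lemma cg_neg {a b : ℚ_[p]} (h : Cg p a b) : Cg p (-a) (-b) := by
  unfold Cg at *; rw [show -a - -b = -(a-b) by ring, norm_neg]; exact h

lemma cg_sum {ι : Type*} {s : Finset ι} {f g : ι → ℚ_[p]}
    (h : ∀ i ∈ s, Cg p (f i) (g i)) : Cg p (∑ i ∈ s, f i) (∑ i ∈ s, g i) := by
  unfold Cg at *
  rw [← Finset.sum_sub_distrib]
  exact IsUltrametricDist.norm_sum_le_of_forall_le_of_nonneg p_inv_nonneg h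

lemma cg_mul {a b c d : ℚ_[p]} (h1 : Cg p a b) (h2 : Cg p c d)
    (hb : ‖b‖ ≤ 1) (hc : ‖c‖ ≤ 1) : Cg p (a * c) (b * d) := by
  unfold Cg at *
  have : a * c - b * d = (a - b) * c + b * (c - d) := by ring
  rw [this]
  refine le_trans (Padic.nonarchimedean _ _) (max_le ?_ ?_)
  · rw [Padic.padicNormE.mul]
    calc ‖a-b‖ * ‖c‖ ≤ (p:ℝ)⁻¹ * 1 := by
          exact mul_le_mul h1 hc (norm_nonneg _) p_inv_nonneg
      _ = (p:ℝ)⁻¹ := by ring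
  · rw [Padic.padicNormE.mul]
    calc ‖b‖ * ‖c-d‖ ≤ 1 * (p:ℝ)⁻¹ := by
          exact mul_le_mul hb h2 (norm_nonneg _) zero_le_one
      _ = (p:ℝ)⁻¹ := by ring

end St9
namespace St9
set_option linter.unusedSectionVars false
variable {p : ℕ} [hpf : Fact p.Prime]

lemma norm_int_le_one' (z : ℤ) : ‖((z:ℤ) : ℚ_[p])‖ ≤ 1 := Padic.norm_int_le_one z

lemma norm_nat_le_one (n : ℕ) : ‖((n:ℕ) : ℚ_[p])‖ ≤ 1 := by
  have := Padic.norm_int_le_one (p := p) (n : ℤ)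
  push_cast at this ⊢; exact this

lemma norm_nat_unit {k : ℕ} (hk : ¬ p ∣ k) : ‖((k:ℕ) : ℚ_[p])‖ = 1 := by
  refine le_antisymm (norm_nat_le_one k) ?_
  by_contra h
  push_neg at h
  have : ‖((k:ℤ) : ℚ_[p])‖ < 1 := by push_cast; exact h
  rw [Padic.norm_intCast_lt_one_iff] at this
  exact hk (by exact_mod_cast this)

/-- a natural in [1, p-1] is a p-adic unit -/
lemma norm_mem_unit {k : ℕ} (hk : k ∈ Finset.Icc 1 (p-1)) : ‖((k:ℕ) : ℚ_[p])‖ = 1 := by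
  simp only [Finset.mem_Icc] at hk
  refine norm_nat_unit (fun hdvd => ?_)
  have h1 : 1 ≤ k := hk.1
  have h2 : k ≤ p - 1 := hk.2
  have := Nat.le_of_dvd (by omega) hdvd
  have hp := hpf.out.two_le
  omega

lemma cg_of_dvd {m : ℤ} (h : (p:ℤ) ∣ m) : Cg p ((m:ℤ) : ℚ_[p]) 0 := by
  unfold Cg
  rw [sub_zero]
  have := (Padic.norm_int_le_pow_iff_dvd (p := p) m 1).2 (by simpa using h)
  simpa using this

lemma cg_int_of_dvd {m n : ℤ} (h : (p:ℤ) ∣ (m - n)) :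
    Cg p ((m:ℤ) : ℚ_[p]) ((n:ℤ) : ℚ_[p]) := by
  unfold Cg
  have := (Padic.norm_int_le_pow_iff_dvd (p := p) (m - n) 1).2 (by simpa using h)
  push_cast at this ⊢
  simpa using this

/-- Fermat's little theorem in ℚ_p -/
lemma not_dvd_of_mem {k : ℕ} (hk : k ∈ Finset.Icc 1 (p-1)) : ¬ p ∣ k := by
  simp only [Finset.mem_Icc] at hk
  intro hdvd
  have := Nat.le_of_dvd (by omega) hdvd
  have hp := hpf.out.two_le
  omega

lemma cg_fermat {k : ℕ} (hk : k ∈ Finset.Icc 1 (p-1)) : Cg p (((k:ℕ) : ℚ_[p])^(p-1)) 1 := by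
  have hk0 : ((k : ZMod p)) ≠ 0 := by
    rw [Ne, ZMod.natCast_eq_zero_iff]
    exact not_dvd_of_mem hk
  have hfer : ((k : ZMod p))^(p-1) = 1 := ZMod.pow_card_sub_one_eq_one hk0
  have hdvd : (p:ℤ) ∣ ((k:ℤ)^(p-1) - 1) := by
    rwa [← ZMod.intCast_zmod_eq_zero_iff_dvd, Int.cast_sub, Int.cast_pow, Int.cast_natCast,
      Int.cast_one, sub_eq_zero]
  have := cg_int_of_dvd (p := p) (m := (k:ℤ)^(p-1)) (n := 1) (by simpa using hdvd)
  push_cast at this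
  exact this

end St9
namespace St9
set_option linter.unusedSectionVars false
variable {p : ℕ} [hpf : Fact p.Prime]

lemma cg_inv {a b : ℚ_[p]} (ha : ‖a‖ = 1) (hb : ‖b‖ = 1) (h : Cg p a b) : Cg p a⁻¹ b⁻¹ := by
  unfold Cg at *
  have ha0 : a ≠ 0 := by intro h0; rw [h0] at ha; simp at ha
  have hb0 : b ≠ 0 := by intro h0; rw [h0] at hb; simp at hb
  have key : a⁻¹ - b⁻¹ = (b - a) * a⁻¹ * b⁻¹ := by
    field_simp
  rw [key, Padic.padicNormE.mul, Padic.padicNormE.mul, norm_inv, norm_inv, ha, hb]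
  simp only [inv_one, mul_one]
  rwa [← norm_neg, neg_sub] at h

lemma cg_mul_left {a b c : ℚ_[p]} (hc : ‖c‖ ≤ 1) (h : Cg p a b) : Cg p (c * a) (c * b) := by
  unfold Cg at *
  have : c * a - c * b = c * (a - b) := by ring
  rw [this, Padic.padicNormE.mul]
  calc ‖c‖ * ‖a - b‖ ≤ 1 * (p:ℝ)⁻¹ := mul_le_mul hc h (norm_nonneg _) zero_le_one
    _ = (p:ℝ)⁻¹ := by ring

/-- Fermat inverse: `(k^a)⁻¹ ≡ k^e` when `a + e = p - 1`. -/
lemma cg_pow_inv {k : ℕ} (hk : k ∈ Finset.Icc 1 (p-1)) {a e : ℕ} (hae : a + e = p - 1) :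
    Cg p ((((k:ℕ) : ℚ_[p])^a)⁻¹) (((k:ℕ) : ℚ_[p])^e) := by
  have hnorm : ‖((k:ℕ) : ℚ_[p])‖ = 1 := norm_mem_unit hk
  have hknz : ((k:ℕ) : ℚ_[p]) ≠ 0 := by
    intro h0; rw [h0] at hnorm; simp at hnorm
  have h1 : Cg p (((k:ℕ) : ℚ_[p])^a * ((k:ℕ) : ℚ_[p])^e) 1 := by
    rw [← pow_add, hae]; exact cg_fermat hk
  have h2 := cg_mul_left (c := (((k:ℕ) : ℚ_[p])^a)⁻¹)
    (by rw [norm_inv, norm_pow, hnorm, one_pow]; simp) h1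
  rw [mul_one, ← mul_assoc, inv_mul_cancel₀ (pow_ne_zero _ hknz), one_mul] at h2
  exact cg_symm h2

lemma sum_range_zmod_eq_univ (f : ZMod p → ZMod p) :
    ∑ k ∈ range p, f (k : ZMod p) = ∑ x : ZMod p, f x := by
  apply Finset.sum_bij' (i := fun (k : ℕ) (_ : k ∈ range p) => (k : ZMod p))
    (j := fun (x : ZMod p) (_ : x ∈ Finset.univ) => x.val)
  · intro a _; exact Finset.mem_univ _
  · intro x _
    simp only [Finset.mem_range]
    exact ZMod.val_lt x
  · intro a ha
    simp only [Finset.mem_range] at ha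
    exact ZMod.val_cast_of_lt ha
  · intro x _
    exact ZMod.natCast_rightInverse x
  · intro a _; rfl

lemma psum_dvd {e : ℕ} (he : e < p - 1) : p ∣ ∑ k ∈ range p, k^e := by
  rw [← ZMod.natCast_eq_zero_iff]
  push_cast
  rw [sum_range_zmod_eq_univ (fun x => x^e)]
  have : Fintype.card (ZMod p) = p := ZMod.card p
  exact FiniteField.sum_pow_lt_card_sub_one (ZMod p) e (by rw [this]; exact he)

/-- power sums over `Icc 1 (p-1)` of exponent `0 < e < p-1` vanish mod p -/
lemma cg_psum {e : ℕ} (he0 : 0 < e) (he : e < p - 1) :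
    Cg p (∑ k ∈ Finset.Icc 1 (p-1), ((k:ℕ) : ℚ_[p])^e) 0 := by
  have h1 : (∑ k ∈ Finset.Icc 1 (p-1), ((k:ℕ) : ℚ_[p])^e)
      = (((∑ k ∈ range p, k^e : ℕ) : ℤ) : ℚ_[p]) := by
    push_cast
    have : range p = insert 0 (Finset.Icc 1 (p-1)) := by
      ext x
      simp only [Finset.mem_range, Finset.mem_insert, Finset.mem_Icc]
      have := hpf.out.two_le
      omega
    rw [this, Finset.sum_insert (by simp)]
    rw [Nat.cast_zero, zero_pow (by omega), zero_add]
  rw [h1]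
  exact cg_of_dvd (by exact_mod_cast psum_dvd he)

lemma cg_card : Cg p (((p - 1 : ℕ) : ℚ_[p])) (-1) := by
  have h := cg_int_of_dvd (p := p) (m := ((p:ℤ) - 1)) (n := -1) (by simp)
  have hp := hpf.out.two_le
  have : (((p - 1 : ℕ) : ℤ) : ℚ_[p]) = (((p:ℤ) - 1 : ℤ) : ℚ_[p]) := by
    congr 1; omega
  rw [show (((p-1:ℕ)) : ℚ_[p]) = (((p - 1 : ℕ) : ℤ) : ℚ_[p]) by push_cast; ring, this]
  convert h using 2
  simp

end St9
namespace St9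
set_option linter.unusedSectionVars false
variable {p : ℕ} [hpf : Fact p.Prime]

lemma norm_p_pow_le (j : ℕ) (hj : 1 ≤ j) : ‖((p:ℚ_[p]))^j‖ ≤ (p:ℝ)⁻¹ := by
  rw [norm_pow, Padic.norm_p]
  calc ((p:ℝ)⁻¹)^j ≤ ((p:ℝ)⁻¹)^1 :=
        pow_le_pow_of_le_one p_inv_nonneg p_inv_le_one hj
    _ = (p:ℝ)⁻¹ := pow_one _

lemma norm_succ_unit {m : ℕ} (hm : m + 1 < p) : ‖(((m+1 : ℕ)) : ℚ_[p])‖ = 1 :=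
  norm_nat_unit (fun hdvd => by
    have := Nat.le_of_dvd (by omega) hdvd; omega)

lemma norm_psum_le {m : ℕ} (hm : m < p - 1) :
    ‖((((∑ k ∈ range p, (k:ℚ)^m) : ℚ)) : ℚ_[p])‖ ≤ (p:ℝ)⁻¹ := by
  have h1 : ((∑ k ∈ range p, (k:ℚ)^m) : ℚ) = ((∑ k ∈ range p, k^m : ℕ) : ℚ) := by push_cast; ring
  rw [h1]
  have h2 : ((((∑ k ∈ range p, k^m : ℕ) : ℚ)) : ℚ_[p]) = (((∑ k ∈ range p, k^m : ℕ) : ℤ) : ℚ_[p]) := by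
    push_cast; ring
  rw [h2]
  have := (Padic.norm_int_le_pow_iff_dvd (p := p) ((∑ k ∈ range p, k^m : ℕ) : ℤ) 1).2
    (by rw [pow_one]; exact_mod_cast psum_dvd hm)
  simpa using this

lemma norm_sub_le_max (a b : ℚ_[p]) : ‖a - b‖ ≤ max ‖a‖ ‖b‖ := by
  rw [sub_eq_add_neg]
  refine le_trans (Padic.nonarchimedean _ _) ?_
  rw [norm_neg]

lemma bern_norm : ∀ m, m < p - 1 → ‖((bernoulli m : ℚ) : ℚ_[p])‖ ≤ 1 := by
  intro m
  induction m using Nat.strong_induction_on with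
  | _ m IH =>
    intro hm
    rcases Nat.eq_zero_or_pos m with rfl | hm0
    · simp
    have hp := hpf.out.two_le
    have hfaul := sum_range_pow p m
    rw [Finset.sum_range_succ] at hfaul
    -- the top term is bernoulli m * (m+1) * p / (m+1) = bernoulli m * p
    have htop : bernoulli m * ((m + 1).choose m) * (p:ℚ) ^ (m + 1 - m) / (m + 1)
        = bernoulli m * p := by
      rw [Nat.choose_succ_self_right]
      have : m + 1 - m = 1 := by omega
      rw [this, pow_one]
      have hne : ((m:ℚ) + 1) ≠ 0 := by positivity
      push_cast
      field_simp
    rw [htop] at hfaul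
    have hkey : ((bernoulli m : ℚ) : ℚ_[p]) * (p:ℚ_[p]) =
        (((∑ k ∈ range p, (k:ℚ)^m : ℚ)) : ℚ_[p])
        - ∑ i ∈ range m, ((bernoulli i : ℚ) : ℚ_[p]) * (((m+1).choose i : ℕ) : ℚ_[p])
            * ((p:ℚ_[p])) ^ (m + 1 - i) * ((((m+1 : ℕ)) : ℚ_[p]))⁻¹ := by
      have := congrArg (fun q : ℚ => (q : ℚ_[p])) hfaul
      push_cast at this ⊢
      simp only [div_eq_mul_inv] at this
      rw [this]
      ring
    have hnorm : ‖((bernoulli m : ℚ) : ℚ_[p]) * (p:ℚ_[p])‖ ≤ (p:ℝ)⁻¹ := by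
      rw [hkey]
      have hR : ‖∑ i ∈ range m, ((bernoulli i : ℚ) : ℚ_[p]) * (((m+1).choose i : ℕ) : ℚ_[p])
            * ((p:ℚ_[p])) ^ (m + 1 - i) * ((((m+1 : ℕ)) : ℚ_[p]))⁻¹‖ ≤ (p:ℝ)⁻¹ := by
        apply IsUltrametricDist.norm_sum_le_of_forall_le_of_nonneg p_inv_nonneg
        intro i hi
        simp only [Finset.mem_range] at hi
        rw [Padic.padicNormE.mul, Padic.padicNormE.mul, Padic.padicNormE.mul, norm_inv]
        rw [norm_succ_unit (by omega), inv_one, mul_one]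
        calc ‖((bernoulli i : ℚ) : ℚ_[p])‖ * ‖(((m+1).choose i : ℕ) : ℚ_[p])‖ * ‖((p:ℚ_[p]))^(m+1-i)‖
            ≤ 1 * 1 * (p:ℝ)⁻¹ := by
              refine mul_le_mul (mul_le_mul (IH i hi (by omega)) (norm_nat_le_one _)
                (norm_nonneg _) ?_) (norm_p_pow_le _ (by omega)) (norm_nonneg _) (by positivity)
              exact le_trans (norm_nonneg _) (IH i hi (by omega) : _) |>.trans (le_refl 1) |>.trans (le_refl 1)
          _ = (p:ℝ)⁻¹ := by ring
      refine le_trans (norm_sub_le_max _ _) (max_le ?_ hR)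
      have := norm_psum_le (p := p) (m := m) (by omega)
      push_cast at this ⊢
      exact this
    rw [Padic.padicNormE.mul, Padic.norm_p] at hnorm
    have hppos : (0:ℝ) < (p:ℝ)⁻¹ := by positivity
    calc ‖((bernoulli m : ℚ) : ℚ_[p])‖
        = ‖((bernoulli m : ℚ) : ℚ_[p])‖ * (p:ℝ)⁻¹ * ((p:ℝ)⁻¹)⁻¹ := by field_simp
      _ ≤ (p:ℝ)⁻¹ * ((p:ℝ)⁻¹)⁻¹ := by
          apply mul_le_mul_of_nonneg_right hnorm (by positivity)
      _ = 1 := by field_simp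

end St9

namespace St9


lemma sum_sum_filter_swap (s : Finset ℕ) (P : ℕ → ℕ → Prop) [DecidableRel P] (f : ℕ → ℕ → ℚ) :
    ∑ a ∈ s, ∑ b ∈ s.filter (fun b => P a b), f a b
      = ∑ b ∈ s, ∑ a ∈ s.filter (fun a => P a b), f a b := by
  simp_rw [Finset.sum_filter]
  exact Finset.sum_comm

lemma sum_swap_le (N : ℕ) (f : ℕ → ℕ → ℚ) :
    ∑ k ∈ Icc 1 N, ∑ j ∈ Icc 1 k, f j k = ∑ j ∈ Icc 1 N, ∑ k ∈ Icc j N, f j k := by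
  have h1 : ∀ k ∈ Icc 1 N, ∑ j ∈ Icc 1 k, f j k
      = ∑ j ∈ (Icc 1 N).filter (fun j => j ≤ k), f j k := by
    intro k hk
    simp only [mem_Icc] at hk
    congr 1
    ext x; simp only [mem_Icc, mem_filter]; omega
  rw [Finset.sum_congr rfl h1, sum_sum_filter_swap (Icc 1 N) (fun k j => j ≤ k) (fun k j => f j k)]
  refine Finset.sum_congr rfl (fun j hj => ?_)
  simp only [mem_Icc] at hj
  congr 1
  ext x; simp only [mem_Icc, mem_filter]; omega

lemma sum_swap_lt (N : ℕ) (f : ℕ → ℕ → ℚ) :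
    ∑ j ∈ Icc 1 N, ∑ k ∈ Ioc j N, f j k = ∑ k ∈ Icc 1 N, ∑ j ∈ Ico 1 k, f j k := by
  have h1 : ∀ j ∈ Icc 1 N, ∑ k ∈ Ioc j N, f j k
      = ∑ k ∈ (Icc 1 N).filter (fun k => j < k), f j k := by
    intro j hj
    simp only [mem_Icc] at hj
    congr 1
    ext x; simp only [mem_Ioc, mem_filter, mem_Icc]; omega
  rw [Finset.sum_congr rfl h1, sum_sum_filter_swap (Icc 1 N) (fun j k => j < k) f]
  refine Finset.sum_congr rfl (fun k hk => ?_)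
  simp only [mem_Icc] at hk
  congr 1
  ext x; simp only [mem_Ico, mem_filter, mem_Icc]; omega

lemma sum_swap_lt' (m : ℕ) (f : ℕ → ℕ → ℚ) :
    ∑ i ∈ Ico 1 m, ∑ k ∈ Ioo i m, f i k = ∑ k ∈ Ico 1 m, ∑ i ∈ Ico 1 k, f i k := by
  have h1 : ∀ i ∈ Ico 1 m, ∑ k ∈ Ioo i m, f i k
      = ∑ k ∈ (Ico 1 m).filter (fun k => i < k), f i k := by
    intro i hi
    simp only [mem_Ico] at hi
    congr 1
    ext x; simp only [mem_Ioo, mem_filter, mem_Ico]; omega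
  rw [Finset.sum_congr rfl h1, sum_sum_filter_swap (Ico 1 m) (fun i k => i < k) f]
  refine Finset.sum_congr rfl (fun k hk => ?_)
  simp only [mem_Ico] at hk
  congr 1
  ext x; simp only [mem_Ico, mem_filter]; omega

lemma split5 (i j N : ℕ) (h1 : 1 ≤ i) (h2 : i < j) (h3 : j ≤ N) (F : ℕ → ℚ) :
    ∑ k ∈ Icc 1 N, F k
      = ∑ k ∈ Ico 1 i, F k + F i + ∑ k ∈ Ioo i j, F k + F j + ∑ k ∈ Ioc j N, F k := by
  have e1 : Icc 1 N = Ico 1 (N+1) := by rw [Finset.Ico_add_one_right_eq_Icc]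
  have e2 : Ioo i j = Ico (i+1) j := by rw [Finset.Ico_add_one_left_eq_Ioo]
  have e3 : Ioc j N = Ico (j+1) (N+1) := by rw [Finset.Ico_add_one_add_one_eq_Ioc]
  rw [e1, e2, e3]
  rw [← Finset.sum_Ico_consecutive F (by omega : 1 ≤ i) (by omega : i ≤ N+1)]
  rw [← Finset.sum_Ico_consecutive F (by omega : i ≤ i+1) (by omega : i+1 ≤ N+1)]
  rw [← Finset.sum_Ico_consecutive F (by omega : i+1 ≤ j) (by omega : j ≤ N+1)]
  rw [← Finset.sum_Ico_consecutive F (by omega : j ≤ j+1) (by omega : j+1 ≤ N+1)]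
  rw [Nat.Ico_succ_singleton, Nat.Ico_succ_singleton]
  simp [Finset.sum_singleton]
  ring

lemma L1 (N : ℕ) : ∑ k ∈ Icc 1 N, mhs2 2 2 k / k = mhs3 2 2 1 N + mhs2 2 3 N := by
  unfold mhs2 mhs3
  have step1 : ∑ k ∈ Icc 1 N, (∑ j ∈ Icc 1 k, ∑ i ∈ Ico 1 j, 1 / ((i:ℚ)^2 * (j:ℚ)^2)) / (k:ℚ)
      = ∑ k ∈ Icc 1 N, ∑ j ∈ Icc 1 k, (∑ i ∈ Ico 1 j, 1 / ((i:ℚ)^2 * (j:ℚ)^2)) / (k:ℚ) := by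
    refine Finset.sum_congr rfl (fun k _ => ?_)
    rw [Finset.sum_div]
  rw [step1, sum_swap_le N (fun j k => (∑ i ∈ Ico 1 j, 1 / ((i:ℚ)^2 * (j:ℚ)^2)) / (k:ℚ))]
  have step2 : ∀ j ∈ Icc 1 N, ∑ k ∈ Icc j N, (∑ i ∈ Ico 1 j, 1 / ((i:ℚ)^2 * (j:ℚ)^2)) / (k:ℚ)
      = (∑ i ∈ Ico 1 j, 1 / ((i:ℚ)^2 * (j:ℚ)^3))
        + ∑ k ∈ Ioc j N, (∑ i ∈ Ico 1 j, 1 / ((i:ℚ)^2 * (j:ℚ)^2)) / (k:ℚ) := by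
    intro j hj
    simp only [mem_Icc] at hj
    have : Icc j N = insert j (Ioc j N) := by
      ext x; simp only [mem_Icc, mem_insert, mem_Ioc]; omega
    rw [this, Finset.sum_insert (by simp)]
    congr 1
    rw [Finset.sum_div]
    refine Finset.sum_congr rfl (fun i _ => ?_)
    ring
  rw [Finset.sum_congr rfl step2, Finset.sum_add_distrib]
  rw [sum_swap_lt N (fun j k => (∑ i ∈ Ico 1 j, 1 / ((i:ℚ)^2 * (j:ℚ)^2)) / (k:ℚ))]
  rw [add_comm]
  congr 1
  refine Finset.sum_congr rfl (fun l _ => ?_)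
  refine Finset.sum_congr rfl (fun j _ => ?_)
  rw [Finset.sum_div]
  refine Finset.sum_congr rfl (fun i _ => ?_)
  ring

lemma L2 (N : ℕ) : hsum 2 N * mhs2 2 1 N
    = 2 * mhs3 2 2 1 N + mhs3 2 1 2 N + mhs2 4 1 N + mhs2 2 3 N := by
  unfold hsum mhs2 mhs3
  have step1 : (∑ k ∈ Icc 1 N, 1 / (k:ℚ)^2) * (∑ j ∈ Icc 1 N, ∑ i ∈ Ico 1 j, 1/((i:ℚ)^2*(j:ℚ)^1))
      = ∑ j ∈ Icc 1 N, ∑ i ∈ Ico 1 j, ∑ k ∈ Icc 1 N, 1/(k:ℚ)^2 * (1/((i:ℚ)^2*(j:ℚ)^1)) := by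
    rw [Finset.mul_sum]
    refine Finset.sum_congr rfl (fun j _ => ?_)
    rw [Finset.mul_sum]
    refine Finset.sum_congr rfl (fun i _ => ?_)
    rw [Finset.sum_mul]
  rw [step1]
  have step2 : ∀ j ∈ Icc 1 N, ∀ i ∈ Ico 1 j,
      ∑ k ∈ Icc 1 N, 1/(k:ℚ)^2 * (1/((i:ℚ)^2*(j:ℚ)^1))
      = (∑ k ∈ Ico 1 i, 1/(k:ℚ)^2 * (1/((i:ℚ)^2*(j:ℚ)^1)))
        + 1/((i:ℚ)^4*(j:ℚ)^1)
        + (∑ k ∈ Ioo i j, 1/(k:ℚ)^2 * (1/((i:ℚ)^2*(j:ℚ)^1)))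
        + 1/((i:ℚ)^2*(j:ℚ)^3)
        + (∑ k ∈ Ioc j N, 1/(k:ℚ)^2 * (1/((i:ℚ)^2*(j:ℚ)^1))) := by
    intro j hj i hi
    simp only [mem_Icc] at hj
    simp only [mem_Ico] at hi
    rw [split5 i j N (by omega) (by omega) (by omega)]
    congr 2
    · congr 1
      · congr 1
        ring
    · ring
  rw [Finset.sum_congr rfl (fun j hj => Finset.sum_congr rfl (fun i hi => step2 j hj i hi))]
  simp only [Finset.sum_add_distrib]
  have hA1 : ∑ j ∈ Icc 1 N, ∑ i ∈ Ico 1 j, ∑ k ∈ Ico 1 i, 1/(k:ℚ)^2 * (1/((i:ℚ)^2*(j:ℚ)^1))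
      = ∑ l ∈ Icc 1 N, ∑ j ∈ Ico 1 l, ∑ i ∈ Ico 1 j, 1/((i:ℚ)^2*(j:ℚ)^2*(l:ℚ)^1) := by
    refine Finset.sum_congr rfl (fun j _ => Finset.sum_congr rfl
      (fun i _ => Finset.sum_congr rfl (fun k _ => by ring)))
  have hA3 : ∑ j ∈ Icc 1 N, ∑ i ∈ Ico 1 j, ∑ k ∈ Ioo i j, 1/(k:ℚ)^2 * (1/((i:ℚ)^2*(j:ℚ)^1))
      = ∑ l ∈ Icc 1 N, ∑ j ∈ Ico 1 l, ∑ i ∈ Ico 1 j, 1/((i:ℚ)^2*(j:ℚ)^2*(l:ℚ)^1) := by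
    refine Finset.sum_congr rfl (fun j _ => ?_)
    rw [sum_swap_lt' j (fun i k => 1/(k:ℚ)^2 * (1/((i:ℚ)^2*(j:ℚ)^1)))]
    refine Finset.sum_congr rfl (fun k _ => Finset.sum_congr rfl (fun i _ => by ring))
  have hA5 : ∑ j ∈ Icc 1 N, ∑ i ∈ Ico 1 j, ∑ k ∈ Ioc j N, 1/(k:ℚ)^2 * (1/((i:ℚ)^2*(j:ℚ)^1))
      = ∑ l ∈ Icc 1 N, ∑ j ∈ Ico 1 l, ∑ i ∈ Ico 1 j, 1/((i:ℚ)^2*(j:ℚ)^1*(l:ℚ)^2) := by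
    have hswap : ∀ j ∈ Icc 1 N, ∑ i ∈ Ico 1 j, ∑ k ∈ Ioc j N, 1/(k:ℚ)^2 * (1/((i:ℚ)^2*(j:ℚ)^1))
        = ∑ k ∈ Ioc j N, ∑ i ∈ Ico 1 j, 1/(k:ℚ)^2 * (1/((i:ℚ)^2*(j:ℚ)^1)) := by
      intro j _
      exact Finset.sum_comm
    rw [Finset.sum_congr rfl hswap,
      sum_swap_lt N (fun j k => ∑ i ∈ Ico 1 j, 1/(k:ℚ)^2 * (1/((i:ℚ)^2*(j:ℚ)^1)))]
    refine Finset.sum_congr rfl (fun l _ => Finset.sum_congr rfl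
      (fun j _ => Finset.sum_congr rfl (fun i _ => by ring)))
  have hA2 : ∑ j ∈ Icc 1 N, ∑ i ∈ Ico 1 j, 1/((i:ℚ)^4*(j:ℚ)^1)
      = ∑ j ∈ Icc 1 N, ∑ i ∈ Ico 1 j, 1/((i:ℚ)^4*(j:ℚ)^1) := rfl
  rw [hA1, hA3, hA5]
  ring

end St9


namespace St9
set_option linter.unusedSectionVars false
open Finset
variable {p : ℕ} [hpf : Fact p.Prime]

lemma norm_pow_inv_unit {k : ℕ} (hk : k ∈ Finset.Icc 1 (p-1)) (a : ℕ) :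
    ‖((((k:ℕ):ℚ_[p]))^a)⁻¹‖ = 1 := by
  rw [norm_inv, norm_pow, norm_mem_unit hk, one_pow, inv_one]

lemma norm_sum_le_one {ι : Type*} {s : Finset ι} {f : ι → ℚ_[p]} (h : ∀ i ∈ s, ‖f i‖ ≤ 1) :
    ‖∑ i ∈ s, f i‖ ≤ 1 :=
  IsUltrametricDist.norm_sum_le_of_forall_le_of_nonneg zero_le_one h

lemma cast_mhs2 (a b n : ℕ) : ((mhs2 a b n : ℚ) : ℚ_[p])
    = ∑ j ∈ Icc 1 n, ∑ i ∈ Ico 1 j, ((((i:ℕ):ℚ_[p]))^a)⁻¹ * ((((j:ℕ):ℚ_[p]))^b)⁻¹ := by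
  unfold mhs2
  push_cast
  simp_rw [one_div, mul_inv]

lemma unit_ne_zero {k : ℕ} (hk : k ∈ Finset.Icc 1 (p-1)) : ((k:ℕ):ℚ_[p]) ≠ 0 := by
  intro h0
  have := norm_mem_unit (p := p) hk
  rw [h0] at this; simp at this

lemma mhs2_eval (hp : 7 ≤ p) {a b : ℕ} (ha : 1 ≤ a) (hb : 1 ≤ b) (hab : a + b ≤ 5) :
    Cg p ((mhs2 a b (p-1) : ℚ) : ℚ_[p])
      (-(((bernoulli (p-a-b) : ℚ) : ℚ_[p]) * ((((p-a).choose (p-a-b)) : ℕ) : ℚ_[p])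
        * ((((p-a:ℕ)) : ℚ_[p]))⁻¹)) := by
  set m := p - 1 - a with hm
  have hmem : ∀ {j i : ℕ}, j ∈ Icc 1 (p-1) → i ∈ Ico 1 j → i ∈ Icc 1 (p-1) := by
    intro j i hj hi
    simp only [mem_Icc] at hj ⊢
    simp only [mem_Ico] at hi
    omega
  have step2 : Cg p ((mhs2 a b (p-1) : ℚ) : ℚ_[p])
      (∑ j ∈ Icc 1 (p-1), ((((j:ℕ):ℚ_[p]))^b)⁻¹ * ∑ i ∈ range j, (((i:ℕ):ℚ_[p]))^m) := by
    rw [cast_mhs2]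
    refine cg_sum (fun j hj => ?_)
    have hfac : ∑ i ∈ Ico 1 j, ((((i:ℕ):ℚ_[p]))^a)⁻¹ * ((((j:ℕ):ℚ_[p]))^b)⁻¹
        = ((((j:ℕ):ℚ_[p]))^b)⁻¹ * ∑ i ∈ Ico 1 j, ((((i:ℕ):ℚ_[p]))^a)⁻¹ := by
      rw [Finset.mul_sum]
      exact Finset.sum_congr rfl (fun i _ => by ring)
    rw [hfac]
    refine cg_mul_left (le_of_eq (norm_pow_inv_unit hj b)) ?_
    have hrange : ∑ i ∈ range j, (((i:ℕ):ℚ_[p]))^m = ∑ i ∈ Ico 1 j, (((i:ℕ):ℚ_[p]))^m := by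
      have hj1 : 1 ≤ j := by simp only [mem_Icc] at hj; exact hj.1
      have h0 : range j = insert 0 (Ico 1 j) := by
        ext x; simp only [mem_range, mem_insert, mem_Ico]; omega
      rw [h0, Finset.sum_insert (by simp)]
      rw [Nat.cast_zero, zero_pow (by omega : m ≠ 0), zero_add]
    rw [hrange]
    exact cg_sum (fun i hi => cg_pow_inv (hmem hj hi) (by omega))
  have hfaul : ∀ j : ℕ, (∑ i ∈ range j, (((i:ℕ):ℚ_[p]))^m)
      = ∑ t ∈ range (m+1), ((bernoulli t : ℚ) : ℚ_[p]) * (((m+1).choose t : ℕ) : ℚ_[p])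
          * (((j:ℕ):ℚ_[p]))^(m+1-t) * (((m:ℚ_[p]))+1)⁻¹ := by
    intro j
    have h := congrArg (fun q : ℚ => (q : ℚ_[p])) (sum_range_pow j m)
    push_cast at h
    simp only [div_eq_mul_inv] at h
    exact h
  have step3 : (∑ j ∈ Icc 1 (p-1), ((((j:ℕ):ℚ_[p]))^b)⁻¹ * ∑ i ∈ range j, (((i:ℕ):ℚ_[p]))^m)
      = ∑ t ∈ range (m+1),
          (((bernoulli t : ℚ) : ℚ_[p]) * (((m+1).choose t : ℕ) : ℚ_[p]) * (((m:ℚ_[p]))+1)⁻¹)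
          * ∑ j ∈ Icc 1 (p-1), ((((j:ℕ):ℚ_[p]))^b)⁻¹ * (((j:ℕ):ℚ_[p]))^(m+1-t) := by
    simp_rw [hfaul, Finset.mul_sum]
    rw [Finset.sum_comm]
    refine Finset.sum_congr rfl (fun t _ => ?_)
    exact Finset.sum_congr rfl (fun j _ => by ring)
  have hW : ∀ t ∈ range (m+1),
      Cg p (∑ j ∈ Icc 1 (p-1), ((((j:ℕ):ℚ_[p]))^b)⁻¹ * (((j:ℕ):ℚ_[p]))^(m+1-t))
        (if t = p - a - b then (-1 : ℚ_[p]) else 0) := by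
    intro t ht
    simp only [Finset.mem_range] at ht
    by_cases hcase : t = p - a - b
    · rw [if_pos hcase]
      have hexp : m + 1 - t = b := by omega
      rw [hexp]
      have hone : ∀ j ∈ Icc 1 (p-1), ((((j:ℕ):ℚ_[p]))^b)⁻¹ * (((j:ℕ):ℚ_[p]))^b = 1 :=
        fun j hj => inv_mul_cancel₀ (pow_ne_zero _ (unit_ne_zero hj))
      rw [Finset.sum_congr rfl hone, Finset.sum_const, Nat.card_Icc]
      have : (p - 1 + 1 - 1) • (1:ℚ_[p]) = (((p-1:ℕ)) : ℚ_[p]) := by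
        simp [nsmul_eq_mul]
      rw [this]
      exact cg_card
    · rw [if_neg hcase]
      rcases lt_trichotomy (m + 1 - t) b with hub | hub | hub
      · have key : ∀ j ∈ Icc 1 (p-1), Cg p (((((j:ℕ):ℚ_[p]))^b)⁻¹ * (((j:ℕ):ℚ_[p]))^(m+1-t))
            ((((j:ℕ):ℚ_[p]))^(p-1-(b-(m+1-t)))) := by
          intro j hj
          have hjne : ((j:ℕ):ℚ_[p]) ≠ 0 := unit_ne_zero hj
          have h1 : ((((j:ℕ):ℚ_[p]))^b)⁻¹ * (((j:ℕ):ℚ_[p]))^(m+1-t)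
              = ((((j:ℕ):ℚ_[p]))^(b-(m+1-t)))⁻¹ := by
            have hsplit : (((j:ℕ):ℚ_[p]))^b
                = (((j:ℕ):ℚ_[p]))^(b-(m+1-t)) * (((j:ℕ):ℚ_[p]))^(m+1-t) := by
              rw [← pow_add]; congr 1; omega
            rw [hsplit, mul_inv, mul_assoc, inv_mul_cancel₀ (pow_ne_zero _ hjne), mul_one]
          rw [h1]
          exact cg_pow_inv hj (by omega)
        have := cg_sum key
        refine cg_trans this (cg_psum (by omega) (by omega))
      · exact absurd (by omega) hcase
      · have key : ∀ j ∈ Icc 1 (p-1), ((((j:ℕ):ℚ_[p]))^b)⁻¹ * (((j:ℕ):ℚ_[p]))^(m+1-t)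
            = (((j:ℕ):ℚ_[p]))^(m+1-t-b) := by
          intro j hj
          have hjne : ((j:ℕ):ℚ_[p]) ≠ 0 := unit_ne_zero hj
          have h2 : (((j:ℕ):ℚ_[p]))^(m+1-t) = (((j:ℕ):ℚ_[p]))^(m+1-t-b) * (((j:ℕ):ℚ_[p]))^b := by
            rw [← pow_add]
            congr 1
            omega
          rw [h2, ← mul_assoc, mul_comm ((((j:ℕ):ℚ_[p]))^b)⁻¹, mul_assoc,
            mul_comm ((((j:ℕ):ℚ_[p]))^b)⁻¹, mul_inv_cancel₀ (pow_ne_zero _ hjne), mul_one]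
        rw [Finset.sum_congr rfl key]
        exact cg_psum (by omega) (by omega)
  have hcoeff_norm : ∀ t ∈ range (m+1),
      ‖((bernoulli t : ℚ) : ℚ_[p]) * (((m+1).choose t : ℕ) : ℚ_[p]) * (((m:ℚ_[p]))+1)⁻¹‖ ≤ 1 := by
    intro t ht
    simp only [Finset.mem_range] at ht
    rw [Padic.padicNormE.mul, Padic.padicNormE.mul]
    have h1 : ‖((bernoulli t : ℚ) : ℚ_[p])‖ ≤ 1 := bern_norm t (by omega)
    have h2 : ‖(((m+1).choose t : ℕ) : ℚ_[p])‖ ≤ 1 := norm_nat_le_one _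
    have h3 : ‖((((m:ℚ_[p]))+1))⁻¹‖ = 1 := by
      rw [norm_inv]
      have : ((m:ℚ_[p]))+1 = (((m+1:ℕ)) : ℚ_[p]) := by push_cast; ring
      rw [this, norm_succ_unit (by omega), inv_one]
    rw [h3, mul_one]
    calc ‖_‖ * ‖_‖ ≤ 1 * 1 := mul_le_mul h1 h2 (norm_nonneg _) zero_le_one
      _ = 1 := by ring
  have final : Cg p ((mhs2 a b (p-1) : ℚ) : ℚ_[p])
      (∑ t ∈ range (m+1),
        (((bernoulli t : ℚ) : ℚ_[p]) * (((m+1).choose t : ℕ) : ℚ_[p]) * (((m:ℚ_[p]))+1)⁻¹)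
        * (if t = p - a - b then (-1 : ℚ_[p]) else 0)) := by
    refine cg_trans step2 ?_
    rw [step3]
    exact cg_sum (fun t ht => cg_mul_left (hcoeff_norm t ht) (hW t ht))
  have hcollapse : (∑ t ∈ range (m+1),
        (((bernoulli t : ℚ) : ℚ_[p]) * (((m+1).choose t : ℕ) : ℚ_[p]) * (((m:ℚ_[p]))+1)⁻¹)
        * (if t = p - a - b then (-1 : ℚ_[p]) else 0))
      = -(((bernoulli (p-a-b) : ℚ) : ℚ_[p]) * ((((p-a).choose (p-a-b)) : ℕ) : ℚ_[p])
        * ((((p-a:ℕ)) : ℚ_[p]))⁻¹) := by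
    rw [Finset.sum_eq_single (p-a-b)]
    · rw [if_pos rfl]
      have hma : m + 1 = p - a := by omega
      have hcast : ((m:ℚ_[p]))+1 = (((p-a:ℕ)) : ℚ_[p]) := by
        rw [← hma]; push_cast; ring
      rw [hma, hcast]
      ring
    · intro t _ hne
      rw [if_neg hne, mul_zero]
    · intro hnotmem
      exact absurd (Finset.mem_range.2 (by omega)) hnotmem
  rw [← hcollapse]
  exact final

end St9


namespace St9
set_option linter.unusedSectionVars false
open Finset
variable {p : ℕ} [hpf : Fact p.Prime]

lemma hsum2_eval (hp : 7 ≤ p) : Cg p ((hsum 2 (p-1) : ℚ) : ℚ_[p]) 0 := by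
  have hcast : ((hsum 2 (p-1) : ℚ) : ℚ_[p]) = ∑ k ∈ Icc 1 (p-1), ((((k:ℕ):ℚ_[p]))^2)⁻¹ := by
    unfold hsum
    push_cast
    simp_rw [one_div]
  rw [hcast]
  have key : ∀ k ∈ Icc 1 (p-1), Cg p (((((k:ℕ):ℚ_[p]))^2)⁻¹) ((((k:ℕ):ℚ_[p]))^(p-3)) :=
    fun k hk => cg_pow_inv hk (by omega)
  exact cg_trans (cg_sum key) (cg_psum (by omega) (by omega))

lemma norm_mhs2_le_one (a b : ℕ) : ‖((mhs2 a b (p-1) : ℚ) : ℚ_[p])‖ ≤ 1 := by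
  rw [cast_mhs2]
  refine norm_sum_le_one (fun j hj => norm_sum_le_one (fun i hi => ?_))
  have hmem : i ∈ Icc 1 (p-1) := by
    simp only [mem_Icc] at hj ⊢
    simp only [mem_Ico] at hi
    omega
  rw [Padic.padicNormE.mul, norm_pow_inv_unit hmem, norm_pow_inv_unit hj, mul_one]

lemma choose_p4 (hp : 7 ≤ p) : (p-4).choose (p-5) = p - 4 := by
  have h1 : p - 5 = (p-4) - 1 := by omega
  rw [h1, Nat.choose_symm (by omega), Nat.choose_one_right]

lemma m41_eval (hp : 7 ≤ p) : Cg p ((mhs2 4 1 (p-1) : ℚ) : ℚ_[p])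
    (-((bernoulli (p-5) : ℚ) : ℚ_[p])) := by
  have h := mhs2_eval (p := p) hp (a := 4) (b := 1) (by norm_num) (by norm_num) (by norm_num)
  have h5 : p - 4 - 1 = p - 5 := by omega
  rw [h5, choose_p4 hp] at h
  have hne : (((p-4:ℕ)) : ℚ_[p]) ≠ 0 := by
    refine unit_ne_zero (k := p-4) ?_
    simp only [mem_Icc]; omega
  have heq : -(((bernoulli (p-5) : ℚ) : ℚ_[p]) * (((p-4:ℕ)) : ℚ_[p]) * ((((p-4:ℕ)) : ℚ_[p]))⁻¹)
      = -((bernoulli (p-5) : ℚ) : ℚ_[p]) := by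
    rw [mul_assoc, mul_inv_cancel₀ hne, mul_one]
  rwa [heq] at h

lemma choose_p2 (hp : 7 ≤ p) : (p-2).choose (p-5) = (p-2).choose 3 := by
  have h1 : p - 5 = (p-2) - 3 := by omega
  rw [h1, Nat.choose_symm (by omega)]

lemma choose3_cg (hp : 7 ≤ p) : Cg p ((((p-2).choose 3 : ℕ)) : ℚ_[p]) (-4) := by
  have hdesc : 6 * ((p-2).choose 3) = (p-4) * ((p-3) * (p-2)) := by
    have h := Nat.descFactorial_eq_factorial_mul_choose (p-2) 3
    have h2 : (p-2).descFactorial 3 = (p-2-2) * ((p-2-1) * ((p-2-0) * 1)) := rfl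
    have h6 : Nat.factorial 3 = 6 := rfl
    rw [h2, h6] at h
    have h3 : p - 2 - 2 = p - 4 := by omega
    have h4 : p - 2 - 1 = p - 3 := by omega
    have h5 : p - 2 - 0 = p - 2 := by omega
    rw [h3, h4, h5] at h
    simp only [mul_one] at h
    exact h.symm
  have hzcast : ∀ k : ℕ, k ≤ p → (((p-k:ℕ)) : ZMod p) = -(k : ZMod p) := by
    intro k hk
    rw [Nat.cast_sub hk, ZMod.natCast_self, zero_sub]
  have hz : ((((p-2).choose 3 : ℕ)) : ZMod p) = -4 := by
    have h6 : ((6:ℕ) : ZMod p) ≠ 0 := by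
      rw [Ne, ZMod.natCast_eq_zero_iff]
      intro hdvd
      have := Nat.le_of_dvd (by norm_num) hdvd
      omega
    have hcast := congrArg (fun n : ℕ => (n : ZMod p)) hdesc
    simp only [Nat.cast_mul, Nat.cast_ofNat] at hcast
    apply mul_left_cancel₀ h6
    push_cast at hcast ⊢
    rw [hcast, hzcast 4 (by omega), hzcast 3 (by omega), hzcast 2 (by omega)]
    ring
  have hdvd : (p:ℤ) ∣ (((p-2).choose 3 : ℕ) : ℤ) - (-4) := by
    rw [← ZMod.intCast_zmod_eq_zero_iff_dvd]
    push_cast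
    rw [hz]
    ring
  have := cg_int_of_dvd (p := p) hdvd
  push_cast at this ⊢
  exact this

lemma m23_eval (hp : 7 ≤ p) : Cg p ((mhs2 2 3 (p-1) : ℚ) : ℚ_[p])
    (-(2 * ((bernoulli (p-5) : ℚ) : ℚ_[p]))) := by
  have h := mhs2_eval (p := p) hp (a := 2) (b := 3) (by norm_num) (by norm_num) (by norm_num)
  have h5 : p - 2 - 3 = p - 5 := by omega
  rw [h5, choose_p2 hp] at h
  refine cg_trans h ?_
  -- -(B * C * (p-2)⁻¹) ≡ -(2B)
  have hBnorm : ‖((bernoulli (p-5) : ℚ) : ℚ_[p])‖ ≤ 1 := bern_norm _ (by omega)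
  have hmem2 : (p-2) ∈ Icc 1 (p-1) := by simp only [mem_Icc]; omega
  have hC : Cg p ((((p-2).choose 3 : ℕ)) : ℚ_[p]) (-4) := choose3_cg hp
  have h2norm : ‖(-2 : ℚ_[p])‖ = 1 := by
    rw [norm_neg]
    have : (2 : ℚ_[p]) = ((2:ℕ) : ℚ_[p]) := by push_cast; ring
    rw [this]
    exact norm_nat_unit (fun hdvd => by have := Nat.le_of_dvd (by norm_num) hdvd; omega)
  have hp2 : Cg p (((((p-2):ℕ)) : ℚ_[p]))⁻¹ ((-2 : ℚ_[p]))⁻¹ := by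
    refine cg_inv (norm_mem_unit hmem2) h2norm ?_
    have hd : (p:ℤ) ∣ (((p-2:ℕ)) : ℤ) - (-2) := by
      have : (((p-2:ℕ)) : ℤ) - (-2) = (p:ℤ) := by omega
      rw [this]
    have := cg_int_of_dvd (p := p) hd
    push_cast at this ⊢
    exact this
  have hmul : Cg p (((bernoulli (p-5) : ℚ) : ℚ_[p]) * (((p-2).choose 3 : ℕ) : ℚ_[p])
      * (((((p-2):ℕ)) : ℚ_[p]))⁻¹)
      (((bernoulli (p-5) : ℚ) : ℚ_[p]) * (-4) * ((-2 : ℚ_[p]))⁻¹) := by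
    refine cg_mul (cg_mul (cg_refl _) hC hBnorm (norm_nat_le_one _)) hp2 ?_ ?_
    · rw [Padic.padicNormE.mul]
      calc ‖_‖ * ‖(-4 : ℚ_[p])‖ ≤ 1 * 1 := by
            refine mul_le_mul hBnorm ?_ (norm_nonneg _) zero_le_one
            have : (-4 : ℚ_[p]) = -((4:ℕ) : ℚ_[p]) := by push_cast; ring
            rw [this, norm_neg]
            exact norm_nat_le_one _
        _ = 1 := by ring
    · rw [norm_inv, norm_mem_unit hmem2, inv_one]
  have hval : ((bernoulli (p-5) : ℚ) : ℚ_[p]) * (-4) * ((-2 : ℚ_[p]))⁻¹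
      = 2 * ((bernoulli (p-5) : ℚ) : ℚ_[p]) := by
    have h2ne : (-2 : ℚ_[p]) ≠ 0 := by
      intro h0
      rw [h0] at h2norm
      simp at h2norm
    field_simp
    ring
  rw [← hval]
  exact cg_neg hmul

end St9


namespace St9
set_option linter.unusedSectionVars false
open Finset
variable {p : ℕ} [hpf : Fact p.Prime]

lemma nested3_eq (N : ℕ) (f : ℕ → ℕ → ℕ → ℚ_[p]) :
    ∑ l ∈ Icc 1 N, ∑ j ∈ Ico 1 l, ∑ i ∈ Ico 1 j, f i j l
      = ∑ x ∈ (Icc 1 N ×ˢ (Icc 1 N ×ˢ Icc 1 N)).filter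
          (fun x : ℕ × ℕ × ℕ => x.1 < x.2.1 ∧ x.2.1 < x.2.2), f x.1 x.2.1 x.2.2 := by
  have hRHS : ∑ x ∈ (Icc 1 N ×ˢ (Icc 1 N ×ˢ Icc 1 N)).filter
          (fun x : ℕ × ℕ × ℕ => x.1 < x.2.1 ∧ x.2.1 < x.2.2), f x.1 x.2.1 x.2.2
      = ∑ i ∈ Icc 1 N, ∑ j ∈ Icc 1 N, ∑ l ∈ Icc 1 N,
          if i < j ∧ j < l then f i j l else 0 := by
    rw [Finset.sum_filter, Finset.sum_product]
    refine Finset.sum_congr rfl (fun i _ => ?_)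
    rw [Finset.sum_product]
  rw [hRHS]
  have hswap : ∑ i ∈ Icc 1 N, ∑ j ∈ Icc 1 N, ∑ l ∈ Icc 1 N,
          (if i < j ∧ j < l then f i j l else 0)
      = ∑ l ∈ Icc 1 N, ∑ j ∈ Icc 1 N, ∑ i ∈ Icc 1 N,
          (if i < j ∧ j < l then f i j l else 0) := by
    calc ∑ i ∈ Icc 1 N, ∑ j ∈ Icc 1 N, ∑ l ∈ Icc 1 N, (if i < j ∧ j < l then f i j l else 0)
        = ∑ i ∈ Icc 1 N, ∑ l ∈ Icc 1 N, ∑ j ∈ Icc 1 N, (if i < j ∧ j < l then f i j l else 0) :=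
          Finset.sum_congr rfl (fun i _ => Finset.sum_comm)
      _ = ∑ l ∈ Icc 1 N, ∑ i ∈ Icc 1 N, ∑ j ∈ Icc 1 N, (if i < j ∧ j < l then f i j l else 0) :=
          Finset.sum_comm
      _ = ∑ l ∈ Icc 1 N, ∑ j ∈ Icc 1 N, ∑ i ∈ Icc 1 N, (if i < j ∧ j < l then f i j l else 0) :=
          Finset.sum_congr rfl (fun l _ => Finset.sum_comm)
  rw [hswap]
  refine Finset.sum_congr rfl (fun l hl => ?_)
  simp only [mem_Icc] at hl
  have h1 : ∀ j ∈ Ico 1 l, ∑ i ∈ Ico 1 j, f i j l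
      = ∑ i ∈ Icc 1 N, if i < j then f i j l else 0 := by
    intro j hj
    simp only [mem_Ico] at hj
    rw [← Finset.sum_filter]
    congr 1
    ext x
    simp only [mem_Ico, mem_filter, mem_Icc]
    omega
  rw [Finset.sum_congr rfl h1]
  have h2 : ∑ j ∈ Ico 1 l, ∑ i ∈ Icc 1 N, (if i < j then f i j l else 0)
      = ∑ j ∈ Icc 1 N, if j < l then ∑ i ∈ Icc 1 N, (if i < j then f i j l else 0) else 0 := by
    rw [← Finset.sum_filter]
    congr 1
    ext x
    simp only [mem_Ico, mem_filter, mem_Icc]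
    omega
  rw [h2]
  refine Finset.sum_congr rfl (fun j _ => ?_)
  by_cases hjl : j < l
  · rw [if_pos hjl]
    refine Finset.sum_congr rfl (fun i _ => ?_)
    by_cases hij : i < j
    · rw [if_pos hij, if_pos ⟨hij, hjl⟩]
    · rw [if_neg hij, if_neg (by tauto)]
  · rw [if_neg hjl]
    rw [Finset.sum_congr rfl (fun i _ => if_neg (by tauto)), Finset.sum_const_zero]

lemma cg_reflect (hp : 7 ≤ p) {k : ℕ} (hk : k ∈ Icc 1 (p-1)) :
    Cg p ((((p-k:ℕ)) : ℚ_[p])) (-(((k:ℕ)) : ℚ_[p])) := by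
  simp only [mem_Icc] at hk
  have hd : (p:ℤ) ∣ (((p-k:ℕ)) : ℤ) - (-(k:ℤ)) := by
    have : (((p-k:ℕ)) : ℤ) - (-(k:ℤ)) = (p:ℤ) := by omega
    rw [this]
  have := cg_int_of_dvd (p := p) hd
  push_cast at this ⊢
  exact this

lemma mhs3_212_cg (hp : 7 ≤ p) : Cg p ((mhs3 2 1 2 (p-1) : ℚ) : ℚ_[p]) 0 := by
  set A : ℚ_[p] := ((mhs3 2 1 2 (p-1) : ℚ) : ℚ_[p]) with hA
  set T : Finset (ℕ × ℕ × ℕ) := (Icc 1 (p-1) ×ˢ (Icc 1 (p-1) ×ˢ Icc 1 (p-1))).filter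
      (fun x : ℕ × ℕ × ℕ => x.1 < x.2.1 ∧ x.2.1 < x.2.2) with hT
  have hmemT : ∀ x ∈ T, x.1 ∈ Icc 1 (p-1) ∧ x.2.1 ∈ Icc 1 (p-1) ∧ x.2.2 ∈ Icc 1 (p-1)
      ∧ x.1 < x.2.1 ∧ x.2.1 < x.2.2 := by
    intro x hx
    rw [hT, Finset.mem_filter, Finset.mem_product, Finset.mem_product] at hx
    exact ⟨hx.1.1, hx.1.2.1, hx.1.2.2, hx.2.1, hx.2.2⟩
  have hcast : A = ∑ x ∈ T, ((((x.1:ℕ)):ℚ_[p])^2 * (((x.2.1:ℕ)):ℚ_[p])^1 * (((x.2.2:ℕ)):ℚ_[p])^2)⁻¹ := by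
    rw [hA]
    unfold mhs3
    push_cast
    simp_rw [one_div]
    exact nested3_eq (p-1) (fun i j l => (((i:ℕ):ℚ_[p])^2 * (((j:ℕ)):ℚ_[p])^1 * (((l:ℕ)):ℚ_[p])^2)⁻¹)
  -- reindex by the reflection involution
  have hreflect : ∀ x ∈ T, (p - x.2.2, p - x.2.1, p - x.1) ∈ T := by
    intro x hx
    obtain ⟨h1, h2, h3, h4, h5⟩ := hmemT x hx
    simp only [mem_Icc] at h1 h2 h3
    rw [hT, Finset.mem_filter, Finset.mem_product, Finset.mem_product]
    refine ⟨⟨?_, ?_, ?_⟩, ?_, ?_⟩ <;> simp only [mem_Icc] <;> omega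
  have hinvol : ∀ x ∈ T, (p - (p - x.1), p - (p - x.2.1), p - (p - x.2.2)) = x := by
    intro x hx
    obtain ⟨h1, h2, h3, _, _⟩ := hmemT x hx
    simp only [mem_Icc] at h1 h2 h3
    have e1 : p - (p - x.1) = x.1 := by omega
    have e2 : p - (p - x.2.1) = x.2.1 := by omega
    have e3 : p - (p - x.2.2) = x.2.2 := by omega
    rw [e1, e2, e3]
  have hreindex : A = ∑ x ∈ T,
      (((((p - x.2.2):ℕ)):ℚ_[p])^2 * ((((p - x.2.1):ℕ)):ℚ_[p])^1 * ((((p - x.1):ℕ)):ℚ_[p])^2)⁻¹ := by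
    rw [hcast]
    refine Finset.sum_nbij' (i := fun x => ((p - x.2.2, p - x.2.1, p - x.1) : ℕ × ℕ × ℕ))
      (j := fun x => ((p - x.2.2, p - x.2.1, p - x.1) : ℕ × ℕ × ℕ))
      (fun x hx => hreflect x hx) (fun x hx => hreflect x hx) ?_ ?_ ?_
    · intro x hx
      simp only
      exact hinvol x hx
    · intro x hx
      simp only
      exact hinvol x hx
    · intro x hx
      obtain ⟨h1, h2, h3, _, _⟩ := hmemT x hx
      simp only [mem_Icc] at h1 h2 h3
      have e1 : p - (p - x.1) = x.1 := by omega
      have e2 : p - (p - x.2.1) = x.2.1 := by omega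
      have e3 : p - (p - x.2.2) = x.2.2 := by omega
      simp only
      rw [e1, e2, e3]
  -- now per-term congruence: reflected body ≡ - body
  have hterm : ∀ x ∈ T, Cg p
      ((((((p - x.2.2):ℕ)):ℚ_[p])^2 * ((((p - x.2.1):ℕ)):ℚ_[p])^1 * ((((p - x.1):ℕ)):ℚ_[p])^2)⁻¹)
      (-((((x.1:ℕ)):ℚ_[p])^2 * (((x.2.1:ℕ)):ℚ_[p])^1 * (((x.2.2:ℕ)):ℚ_[p])^2)⁻¹) := by
    intro x hx
    obtain ⟨h1, h2, h3, _, _⟩ := hmemT x hx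
    have hm1 : (p - x.1) ∈ Icc 1 (p-1) := by
      simp only [mem_Icc] at h1 ⊢; omega
    have hm2 : (p - x.2.1) ∈ Icc 1 (p-1) := by
      simp only [mem_Icc] at h2 ⊢; omega
    have hm3 : (p - x.2.2) ∈ Icc 1 (p-1) := by
      simp only [mem_Icc] at h3 ⊢; omega
    have c1 : Cg p (((((p - x.1):ℕ)):ℚ_[p])) (-(((x.1:ℕ)):ℚ_[p])) := cg_reflect hp h1
    have c2 : Cg p (((((p - x.2.1):ℕ)):ℚ_[p])) (-(((x.2.1:ℕ)):ℚ_[p])) := cg_reflect hp h2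
    have c3 : Cg p (((((p - x.2.2):ℕ)):ℚ_[p])) (-(((x.2.2:ℕ)):ℚ_[p])) := cg_reflect hp h3
    have hn1 : ‖(-(((x.1:ℕ)):ℚ_[p]))‖ = 1 := by rw [norm_neg]; exact norm_mem_unit h1
    have hn2 : ‖(-(((x.2.1:ℕ)):ℚ_[p]))‖ = 1 := by rw [norm_neg]; exact norm_mem_unit h2
    have hn3 : ‖(-(((x.2.2:ℕ)):ℚ_[p]))‖ = 1 := by rw [norm_neg]; exact norm_mem_unit h3
    have cpow1 : Cg p ((((((p - x.1):ℕ)):ℚ_[p]))^2) ((-(((x.1:ℕ)):ℚ_[p]))^2) := by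
      have := cg_mul c1 c1 (le_of_eq hn1) (le_of_eq (norm_mem_unit hm1))
      rw [← pow_two, ← pow_two] at this
      exact this
    have cpow3 : Cg p ((((((p - x.2.2):ℕ)):ℚ_[p]))^2) ((-(((x.2.2:ℕ)):ℚ_[p]))^2) := by
      have := cg_mul c3 c3 (le_of_eq hn3) (le_of_eq (norm_mem_unit hm3))
      rw [← pow_two, ← pow_two] at this
      exact this
    have hprod : Cg p
        ((((((p - x.2.2):ℕ)):ℚ_[p]))^2 * ((((p - x.2.1):ℕ)):ℚ_[p])^1 * ((((p - x.1):ℕ)):ℚ_[p])^2)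
        ((-(((x.2.2:ℕ)):ℚ_[p]))^2 * (-(((x.2.1:ℕ)):ℚ_[p]))^1 * (-(((x.1:ℕ)):ℚ_[p]))^2) := by
      refine cg_mul (cg_mul cpow3 ?c2' ?n1 ?n2) cpow1 ?n3 ?n4
      case c2' => rw [pow_one, pow_one]; exact c2
      case n1 => rw [norm_pow, hn3, one_pow]
      case n2 => rw [norm_pow, norm_mem_unit hm2, one_pow]
      case n3 =>
        rw [Padic.padicNormE.mul, norm_pow, norm_pow, hn3, pow_one, hn2, one_pow, one_mul]
      case n4 => rw [norm_pow, norm_mem_unit hm1, one_pow]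
    have hinv : Cg p
        ((((((p - x.2.2):ℕ)):ℚ_[p]))^2 * ((((p - x.2.1):ℕ)):ℚ_[p])^1 * ((((p - x.1):ℕ)):ℚ_[p])^2)⁻¹
        (((-(((x.2.2:ℕ)):ℚ_[p]))^2 * (-(((x.2.1:ℕ)):ℚ_[p]))^1 * (-(((x.1:ℕ)):ℚ_[p]))^2))⁻¹ := by
      refine cg_inv ?_ ?_ hprod
      · rw [Padic.padicNormE.mul, Padic.padicNormE.mul, norm_pow, norm_pow, norm_pow,
          norm_mem_unit hm3, norm_mem_unit hm2, norm_mem_unit hm1]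
        norm_num
      · rw [Padic.padicNormE.mul, Padic.padicNormE.mul, norm_pow, norm_pow, norm_pow, hn3, hn2, hn1]
        norm_num
    have hval : (((-(((x.2.2:ℕ)):ℚ_[p]))^2 * (-(((x.2.1:ℕ)):ℚ_[p]))^1 * (-(((x.1:ℕ)):ℚ_[p]))^2))⁻¹
        = -((((x.1:ℕ)):ℚ_[p])^2 * (((x.2.1:ℕ)):ℚ_[p])^1 * (((x.2.2:ℕ)):ℚ_[p])^2)⁻¹ := by
      rw [show ((-(((x.2.2:ℕ)):ℚ_[p]))^2 * (-(((x.2.1:ℕ)):ℚ_[p]))^1 * (-(((x.1:ℕ)):ℚ_[p]))^2)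
          = -((((x.1:ℕ)):ℚ_[p])^2 * (((x.2.1:ℕ)):ℚ_[p])^1 * (((x.2.2:ℕ)):ℚ_[p])^2) by ring]
      rw [inv_neg]
    rw [← hval]
    exact hinv
  have hAneg : Cg p A (-A) := by
    nth_rewrite 1 [hreindex]
    rw [hcast]
    rw [← Finset.sum_neg_distrib]
    exact cg_sum hterm
  -- conclude A ≡ 0 since p is odd
  unfold Cg at hAneg ⊢
  have h2A : ‖2 * A‖ ≤ (p:ℝ)⁻¹ := by
    have : 2 * A = A - (-A) := by ring
    rw [this]
    exact hAneg
  rw [Padic.padicNormE.mul] at h2A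
  have h2norm : ‖(2:ℚ_[p])‖ = 1 := by
    have : (2 : ℚ_[p]) = ((2:ℕ) : ℚ_[p]) := by push_cast; ring
    rw [this]
    refine norm_nat_unit (fun hdvd => ?_)
    have := Nat.le_of_dvd (by norm_num) hdvd
    omega
  rw [h2norm, one_mul] at h2A
  rwa [sub_zero]

end St9


namespace St9
set_option linter.unusedSectionVars false
open Finset
variable {p : ℕ} [hpf : Fact p.Prime]

lemma cg_sub {a b c d : ℚ_[p]} (h1 : Cg p a b) (h2 : Cg p c d) : Cg p (a - c) (b - d) := by
  have := cg_add h1 (cg_neg h2)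
  simpa [sub_eq_add_neg] using this

lemma norm_two_unit (hp : 7 ≤ p) : ‖(2:ℚ_[p])‖ = 1 := by
  have : (2 : ℚ_[p]) = ((2:ℕ) : ℚ_[p]) := by push_cast; ring
  rw [this]
  refine norm_nat_unit (fun hdvd => ?_)
  have := Nat.le_of_dvd (by norm_num) hdvd
  omega

lemma main_cg (hp : 7 ≤ p) :
    Cg p ((∑ k ∈ Finset.Icc 1 (p - 1), mhs2 2 2 k / k : ℚ) : ℚ_[p])
      (-(1/2) * ((bernoulli (p-5) : ℚ) : ℚ_[p])) := by
  set B : ℚ_[p] := ((bernoulli (p-5) : ℚ) : ℚ_[p]) with hBdef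
  set M221 : ℚ_[p] := ((mhs3 2 2 1 (p-1) : ℚ) : ℚ_[p]) with hM221
  set M212 : ℚ_[p] := ((mhs3 2 1 2 (p-1) : ℚ) : ℚ_[p]) with hM212
  set M41 : ℚ_[p] := ((mhs2 4 1 (p-1) : ℚ) : ℚ_[p]) with hM41
  set M23 : ℚ_[p] := ((mhs2 2 3 (p-1) : ℚ) : ℚ_[p]) with hM23
  set M21 : ℚ_[p] := ((mhs2 2 1 (p-1) : ℚ) : ℚ_[p]) with hM21
  set Hs : ℚ_[p] := ((hsum 2 (p-1) : ℚ) : ℚ_[p]) with hHs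
  have hX : ((∑ k ∈ Finset.Icc 1 (p - 1), mhs2 2 2 k / k : ℚ) : ℚ_[p]) = M221 + M23 := by
    rw [hM221, hM23, ← Rat.cast_add]
    exact congrArg _ (L1 (p-1))
  have hL2c : Hs * M21 = 2 * M221 + M212 + M41 + M23 := by
    rw [hHs, hM21, hM221, hM212, hM41, hM23, ← Rat.cast_mul]
    rw [L2 (p-1)]
    push_cast
    ring
  have hprod : Cg p (Hs * M21) 0 := by
    have h := cg_mul (hsum2_eval hp) (cg_refl M21) (by simp) (norm_mhs2_le_one 2 1)
    rw [zero_mul] at h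
    exact h
  have h221 : Cg p (2 * M221) ((0 - 0 - (-B)) - (-(2 * B))) := by
    have heq : 2 * M221 = ((Hs * M21 - M212) - M41) - M23 := by
      rw [hL2c]; ring
    rw [heq]
    exact cg_sub (cg_sub (cg_sub hprod (mhs3_212_cg hp)) (m41_eval hp)) (m23_eval hp)
  have h2X : Cg p (2 * (M221 + M23)) (((0 - 0 - (-B)) - (-(2 * B))) + 2 * (-(2 * B))) := by
    have heq : 2 * (M221 + M23) = 2 * M221 + 2 * M23 := by ring
    rw [heq]
    exact cg_add h221 (cg_mul_left (le_of_eq (norm_two_unit hp)) (m23_eval hp))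
  have hval : (((0 - 0 - (-B)) - (-(2 * B))) + 2 * (-(2 * B))) = -B := by ring
  rw [hval] at h2X
  rw [hX]
  -- divide by 2
  unfold Cg at h2X ⊢
  have h2ne : (2:ℚ_[p]) ≠ 0 := by
    intro h0
    have := norm_two_unit (p := p) hp
    rw [h0] at this
    simp at this
  have hfactor : (M221 + M23) - (-(1/2) * B) = 2⁻¹ * (2 * (M221 + M23) - (-B)) := by
    field_simp
  rw [hfactor, Padic.padicNormE.mul, norm_inv, norm_two_unit hp, inv_one, one_mul]
  exact h2X

end St9

theorem stmt9 (p : ℕ) [Fact p.Prime] (hp : 7 ≤ p) :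
    padicCongr p 1 (∑ k ∈ Finset.Icc 1 (p - 1), mhs2 2 2 k / k)
      (-(1 / 2) * bernoulli (p - 5)) := by
  unfold padicCongr
  rw [zpow_neg, zpow_one]
  have h := St9.main_cg (p := p) hp
  unfold St9.Cg at h
  have hcast : (((∑ k ∈ Finset.Icc 1 (p - 1), mhs2 2 2 k / k) - (-(1/2) * bernoulli (p-5)) : ℚ) : ℚ_[p])
      = ((∑ k ∈ Finset.Icc 1 (p - 1), mhs2 2 2 k / k : ℚ) : ℚ_[p])
        - (-(1/2) * ((bernoulli (p-5) : ℚ) : ℚ_[p])) := by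
    push_cast
    ring
  rw [hcast]
  exact h
end

section
/- Let k be a nonnegative integer. Then for every positive integer n, ∑_{m=0}^{n-1} (2m+1)³·C(m+k,2k)² = ((n−k)²·(2n²−k−1)/(k+1))·C(n+k,2k)², as an identity of rational numbers. -/
lemma key_choose (m b : ℕ) :
    ((m : ℚ) + 1 - b) * (((m + 1).choose b : ℕ) : ℚ) = ((m : ℚ) + 1) * ((m.choose b : ℕ) : ℚ) := by
  rcases le_or_gt b (m + 1) with hb | hb
  · have h : (m + 1).choose b * (m + 1 - b) = (m + 1) * m.choose b := by
      rw [← Nat.choose_succ_right_eq, ← Nat.add_one_mul_choose_eq]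
    have := congrArg (fun x : ℕ => (x : ℚ)) h
    push_cast [Nat.cast_sub hb] at this
    linarith [this]
  · rw [Nat.choose_eq_zero_of_lt hb, Nat.choose_eq_zero_of_lt (by omega)]
    simp

lemma stmt15_all (k : ℕ) (n : ℕ) :
    ∑ m ∈ Finset.range n, (2 * (m : ℚ) + 1) ^ 3 * ((m + k).choose (2 * k) : ℚ) ^ 2
      = ((n : ℚ) - (k : ℚ)) ^ 2 * (2 * (n : ℚ) ^ 2 - (k : ℚ) - 1) / ((k : ℚ) + 1)
          * ((n + k).choose (2 * k) : ℚ) ^ 2 := by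
  have hk1 : (k : ℚ) + 1 ≠ 0 := by positivity
  induction n with
  | zero =>
    simp only [Finset.range_zero, Finset.sum_empty, Nat.cast_zero, Nat.zero_add]
    rcases Nat.eq_zero_or_pos k with hk | hk
    · subst hk; norm_num
    · rw [Nat.choose_eq_zero_of_lt (by omega)]
      simp
  | succ n ih =>
    rw [Finset.sum_range_succ, ih]
    have hkey : ((n : ℚ) + k + 1 - 2 * k) * (((n + k + 1).choose (2 * k) : ℕ) : ℚ)
        = ((n : ℚ) + k + 1) * (((n + k).choose (2 * k) : ℕ) : ℚ) := by
      have := key_choose (n + k) (2 * k)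
      push_cast at this ⊢
      linarith [this]
    have hC : (((n + 1 + k).choose (2 * k) : ℕ) : ℚ) = (((n + k + 1).choose (2 * k) : ℕ) : ℚ) := by
      norm_num [Nat.add_right_comm]
    rw [hC]
    set C1 : ℚ := (((n + k).choose (2 * k) : ℕ) : ℚ)
    set C2 : ℚ := (((n + k + 1).choose (2 * k) : ℕ) : ℚ)
    push_cast
    have hsq : ((n : ℚ) + 1 - k) ^ 2 * C2 ^ 2 = ((n : ℚ) + 1 + k) ^ 2 * C1 ^ 2 := by
      linear_combination (((n : ℚ) + k + 1 - 2 * k) * C2 + ((n : ℚ) + k + 1) * C1) * hkey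
    field_simp
    linear_combination (-1) * (2 * ((n : ℚ) + 1) ^ 2 - k - 1) * hsq

theorem stmt15 (k : ℕ) (n : ℕ) (hn : 0 < n) :
    ∑ m ∈ Finset.range n, (2 * (m : ℚ) + 1) ^ 3 * ((m + k).choose (2 * k) : ℚ) ^ 2
      = ((n : ℚ) - (k : ℚ)) ^ 2 * (2 * (n : ℚ) ^ 2 - (k : ℚ) - 1) / ((k : ℚ) + 1)
          * ((n + k).choose (2 * k) : ℚ) ^ 2 := by
  exact stmt15_all k n
end

section
/- Let p ≥ 7 be a prime. Then ∑_{k=0}^{p-1} H(2,2;k)/(k+1) ≡ (3/2)·B_{p-5} − H_{p-1}^{(4)}/(2p) (mod p), where the congruence of rational numbers means the p-adic valuation of the difference is at least 1. -/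
open Finset

lemma hsum_succ (m n : ℕ) : hsum m (n+1) = hsum m n + 1/((n+1:ℕ) : ℚ)^m := by
  unfold hsum
  rw [← Finset.Ico_add_one_right_eq_Icc, Finset.sum_Ico_succ_top (by omega), Finset.Ico_add_one_right_eq_Icc]

lemma mhs2_succ (a b n : ℕ) :
    mhs2 a b (n+1) = mhs2 a b n + hsum a n / ((n+1:ℕ) : ℚ)^b := by
  unfold mhs2 hsum
  rw [← Finset.Ico_add_one_right_eq_Icc, Finset.sum_Ico_succ_top (by omega), Finset.Ico_add_one_right_eq_Icc,
    Finset.sum_div]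
  congr 1
  apply Finset.sum_congr rfl
  intro i _
  rw [div_div]

lemma mhs3_succ (a b c n : ℕ) :
    mhs3 a b c (n+1) = mhs3 a b c n + mhs2 a b n / ((n+1:ℕ) : ℚ)^c := by
  unfold mhs3 mhs2
  rw [← Finset.Ico_add_one_right_eq_Icc, Finset.sum_Ico_succ_top (by omega), Finset.Ico_add_one_right_eq_Icc,
    Finset.sum_div]
  congr 1
  apply Finset.sum_congr rfl
  intro j _
  rw [Finset.sum_div]
  apply Finset.sum_congr rfl
  intro i _
  rw [div_div]

lemma mhs2_diag (n : ℕ) : 2 * mhs2 2 2 n = hsum 2 n^2 - hsum 4 n := by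
  induction n with
  | zero => simp [mhs2, hsum]
  | succ n ih =>
    rw [mhs2_succ, hsum_succ, hsum_succ, mul_add, ih]
    have h : (((n+1:ℕ):ℚ))^2 ≠ 0 := by positivity
    field_simp
    ring

lemma lhs_eq (n : ℕ) : ∑ k ∈ Finset.range n, mhs2 2 2 k / ((k : ℚ) + 1) = mhs3 2 2 1 n := by
  induction n with
  | zero => simp [mhs3]
  | succ n ih =>
    rw [Finset.sum_range_succ, ih, mhs3_succ]
    norm_num
open Finset

lemma faulhaber' (m j : ℕ) (hm : 1 ≤ m) :
    ∑ i ∈ Ico 1 j, (i:ℚ)^m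
      = ∑ k ∈ range (m+1), bernoulli k * ((m+1).choose k) * (j:ℚ)^(m+1-k) / (m+1) := by
  have h := sum_range_pow j m
  rcases Nat.eq_zero_or_pos j with hj | hj
  · subst hj
    rw [show Ico 1 0 = (∅ : Finset ℕ) from rfl, sum_empty]
    rw [eq_comm]
    apply Finset.sum_eq_zero
    intro k hk
    rw [mem_range] at hk
    rw [Nat.cast_zero, zero_pow (by omega : m + 1 - k ≠ 0)]
    ring
  · have : ∑ i ∈ range j, (i:ℚ)^m = ∑ i ∈ Ico 1 j, (i:ℚ)^m := by
      rw [range_eq_Ico, Finset.sum_eq_sum_Ico_succ_bot hj]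
      simp [zero_pow (by omega : m ≠ 0)]
    rw [← this, h]

-- p-adic section
variable {p : ℕ} [hfp : Fact p.Prime]

lemma norm_sum_le_of {α : Type*} (s : Finset α) (f : α → ℚ_[p]) (C : ℝ) (hC : 0 ≤ C)
    (h : ∀ i ∈ s, ‖f i‖ ≤ C) : ‖∑ i ∈ s, f i‖ ≤ C := by
  classical
  induction s using Finset.induction with
  | empty => simpa using hC
  | @insert a s hns hx =>
    rw [Finset.sum_insert hns]
    refine le_trans (Padic.nonarchimedean _ _) (max_le (h a (mem_insert_self a s)) ?_)
    exact hx fun i hi => h i (mem_insert_of_mem hi)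

lemma int_cong (a : ℤ) (h : (p:ℤ) ∣ a) : ‖(a : ℚ_[p])‖ ≤ ((p:ℝ))⁻¹ := by
  have := (Padic.norm_int_le_pow_iff_dvd (p := p) a 1).mpr (by simpa using h)
  simpa using this

lemma norm_nat_unit_s17 {j : ℕ} (h1 : 1 ≤ j) (h2 : j ≤ p - 1) : ‖(j : ℚ_[p])‖ = 1 := by
  have hp := hfp.out
  have hnd : ¬ ((p:ℤ) ∣ (j:ℤ)) := by
    intro hd
    have := Int.le_of_dvd (by exact_mod_cast h1) hd
    have hp2 := hp.two_le
    omega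
  have hle : ‖((j:ℤ) : ℚ_[p])‖ ≤ 1 := Padic.norm_int_le_one _
  have hlt : ¬ ‖((j:ℤ) : ℚ_[p])‖ < 1 := fun hl => hnd (Padic.norm_intCast_lt_one_iff.mp hl)
  have : ‖((j:ℤ) : ℚ_[p])‖ = 1 := le_antisymm hle (not_lt.mp hlt)
  simpa using this

lemma norm_nat_pow_unit {j a : ℕ} (h1 : 1 ≤ j) (h2 : j ≤ p - 1) : ‖((j : ℚ_[p]))^a‖ = 1 := by
  rw [norm_pow, norm_nat_unit_s17 h1 h2, one_pow]

lemma cong_add {a b c d : ℚ_[p]} {E : ℝ} (h1 : ‖a - b‖ ≤ E) (h2 : ‖c - d‖ ≤ E) :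
    ‖(a + c) - (b + d)‖ ≤ E := by
  have : (a + c) - (b + d) = (a - b) + (c - d) := by ring
  rw [this]
  exact le_trans (Padic.nonarchimedean _ _) (max_le h1 h2)

lemma cong_mul {a b c d : ℚ_[p]} {E : ℝ} (hE : 0 ≤ E) (h1 : ‖a - b‖ ≤ E) (h2 : ‖c - d‖ ≤ E)
    (hb : ‖b‖ ≤ 1) (hc : ‖c‖ ≤ 1) : ‖a * c - b * d‖ ≤ E := by
  have : a * c - b * d = (a - b) * c + b * (c - d) := by ring
  rw [this]
  refine le_trans (Padic.nonarchimedean _ _) (max_le ?_ ?_)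
  · rw [norm_mul]
    calc ‖a - b‖ * ‖c‖ ≤ E * 1 := mul_le_mul h1 hc (norm_nonneg _) hE
    _ = E := mul_one E
  · rw [norm_mul]
    calc ‖b‖ * ‖c - d‖ ≤ 1 * E := mul_le_mul hb h2 (norm_nonneg _) zero_le_one
    _ = E := one_mul E

lemma cong_sum {α : Type*} (s : Finset α) (f g : α → ℚ_[p]) {E : ℝ} (hE : 0 ≤ E)
    (h : ∀ i ∈ s, ‖f i - g i‖ ≤ E) : ‖∑ i ∈ s, f i - ∑ i ∈ s, g i‖ ≤ E := by
  rw [← Finset.sum_sub_distrib]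
  exact norm_sum_le_of s _ E hE h

def Pq (p n : ℕ) : ℚ := ∑ j ∈ Icc 1 (p-1), (j:ℚ)^n

lemma zmod_units_sum (n : ℕ) :
    ∑ j ∈ Icc 1 (p-1), ((j : ZMod p))^n = if p - 1 ∣ n then -1 else 0 := by
  classical
  have hp := hfp.out
  have h2 : (2:ℕ) ≤ p := hp.two_le
  have key : ∑ j ∈ Icc 1 (p-1), ((j : ZMod p))^n = ∑ x : (ZMod p)ˣ, ((x : ZMod p))^n := by
    apply Finset.sum_bij (fun (j : ℕ) (hj : j ∈ Icc 1 (p-1)) =>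
      ZMod.unitOfCoprime j (by
        rw [mem_Icc] at hj
        exact (Nat.coprime_comm.mp (hp.coprime_iff_not_dvd.mpr
          (Nat.not_dvd_of_pos_of_lt (by omega) (by omega))))))
    · intro a ha; exact Finset.mem_univ _
    · intro a ha b hb hab
      have h1 := congrArg (fun (u : (ZMod p)ˣ) => (u : ZMod p)) hab
      simp only [ZMod.coe_unitOfCoprime] at h1
      rw [mem_Icc] at ha hb
      have := congrArg ZMod.val h1
      rwa [ZMod.val_cast_of_lt (by omega), ZMod.val_cast_of_lt (by omega)] at this
    · intro x _
      refine ⟨(x : ZMod p).val, ?_, ?_⟩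
      · rw [mem_Icc]
        have hlt := ZMod.val_lt (x : ZMod p)
        have hne : (x : ZMod p).val ≠ 0 := by
          intro h0
          have : (x : ZMod p) = 0 := by
            have := ZMod.natCast_rightInverse (n := p) (x : ZMod p)
            rw [h0] at this
            simpa using this.symm
          exact (x.ne_zero) this
        omega
      · apply Units.ext
        rw [ZMod.coe_unitOfCoprime]
        exact ZMod.natCast_rightInverse (n := p) (x : ZMod p)
    · intro a ha
      rw [ZMod.coe_unitOfCoprime]
  rw [key]
  have := FiniteField.sum_pow_units (ZMod p) n
  simpa [ZMod.card] using this

lemma P_bound0 (n : ℕ) (hn : 0 < n) (hnd : ¬ (p - 1 ∣ n)) :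
    ‖((Pq p n : ℚ) : ℚ_[p])‖ ≤ ((p:ℝ))⁻¹ := by
  have hz : ((∑ j ∈ Icc 1 (p-1), j^n : ℕ) : ZMod p) = 0 := by
    push_cast
    rw [zmod_units_sum, if_neg hnd]
  have hdvd : (p:ℤ) ∣ ((∑ j ∈ Icc 1 (p-1), j^n : ℕ) : ℤ) := by
    exact_mod_cast (ZMod.natCast_eq_zero_iff _ p).mp hz
  have := int_cong _ hdvd
  have hcast : (((∑ j ∈ Icc 1 (p-1), j^n : ℕ) : ℤ) : ℚ_[p]) = ((Pq p n : ℚ) : ℚ_[p]) := by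
    unfold Pq
    push_cast
    ring
  rwa [hcast] at this

lemma P_bound1 (n : ℕ) (hd : p - 1 ∣ n) :
    ‖((Pq p n : ℚ) : ℚ_[p]) + 1‖ ≤ ((p:ℝ))⁻¹ := by
  have hz : (((((∑ j ∈ Icc 1 (p-1), j^n : ℕ) : ℤ) + 1) : ℤ) : ZMod p) = 0 := by
    push_cast
    rw [zmod_units_sum, if_pos hd]
    ring
  have hdvd : (p:ℤ) ∣ (((∑ j ∈ Icc 1 (p-1), j^n : ℕ) : ℤ) + 1) :=
    (ZMod.intCast_zmod_eq_zero_iff_dvd _ p).mp hz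
  have := int_cong _ hdvd
  have hcast : ((((∑ j ∈ Icc 1 (p-1), j^n : ℕ) : ℤ) + 1 : ℤ) : ℚ_[p])
      = ((Pq p n : ℚ) : ℚ_[p]) + 1 := by
    unfold Pq
    push_cast
    ring
  rwa [hcast] at this

lemma fermat_pow {j : ℕ} (h1 : 1 ≤ j) (h2 : j ≤ p - 1) :
    ‖((j : ℚ_[p]))^(p-1) - 1‖ ≤ ((p:ℝ))⁻¹ := by
  have hp := hfp.out
  have hz : (((j:ℤ)^(p-1) - 1 : ℤ) : ZMod p) = 0 := by
    push_cast
    rw [ZMod.pow_card_sub_one_eq_one]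
    · ring
    · intro h0
      have := (ZMod.natCast_eq_zero_iff j p).mp h0
      have := Nat.le_of_dvd (by omega) this
      omega
  have hdvd : (p:ℤ) ∣ ((j:ℤ)^(p-1) - 1) := (ZMod.intCast_zmod_eq_zero_iff_dvd _ p).mp hz
  have := int_cong _ hdvd
  have hcast : ((((j:ℤ)^(p-1) - 1 : ℤ)) : ℚ_[p]) = ((j : ℚ_[p]))^(p-1) - 1 := by push_cast; ring
  rwa [hcast] at this

lemma inv_pow_cong {j a : ℕ} (h1 : 1 ≤ j) (h2 : j ≤ p - 1) (ha : a ≤ p - 1) :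
    ‖1 / ((j : ℚ_[p]))^a - ((j : ℚ_[p]))^(p-1-a)‖ ≤ ((p:ℝ))⁻¹ := by
  have hj : ‖(j : ℚ_[p])‖ = 1 := norm_nat_unit_s17 h1 h2
  have hj0 : (j : ℚ_[p]) ≠ 0 := by
    intro h0; rw [h0] at hj; simp at hj
  have hpow : ((j : ℚ_[p]))^(p-1-a) * ((j : ℚ_[p]))^a = ((j : ℚ_[p]))^(p-1) := by
    rw [← pow_add]; congr 1; omega
  have key : 1 / ((j : ℚ_[p]))^a - ((j : ℚ_[p]))^(p-1-a)
      = (1 - ((j : ℚ_[p]))^(p-1)) / ((j : ℚ_[p]))^a := by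
    rw [sub_div, ← hpow]
    congr 1
    rw [mul_div_assoc, div_self (pow_ne_zero _ hj0), mul_one]
  rw [key, norm_div, norm_pow, hj, one_pow, div_one, norm_sub_rev]
  exact fermat_pow h1 h2

lemma range_sum_zmod (k : ℕ) (hk0 : 0 < k) (hkd : ¬ (p - 1 ∣ k)) :
    ((∑ i ∈ range p, i^k : ℕ) : ZMod p) = 0 := by
  have hp := hfp.out
  have hp2 := hp.two_le
  push_cast
  rw [range_eq_Ico, Finset.sum_eq_sum_Ico_succ_bot hp.pos]
  have hIco : Ico 1 p = Icc 1 (p-1) := by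
    rw [← Finset.Ico_add_one_right_eq_Icc]
    congr 1
    omega
  rw [hIco, zmod_units_sum, if_neg hkd]
  rw [Nat.cast_zero, zero_pow (by omega : k ≠ 0)]
  ring

lemma bern_norm : ∀ k, k ≤ p - 2 → ‖((bernoulli k : ℚ) : ℚ_[p])‖ ≤ 1 := by
  have hp := hfp.out
  have hppos : (0:ℝ) < p := by exact_mod_cast hp.pos
  intro k
  induction k using Nat.strong_induction_on with
  | _ k ih =>
    intro hk
    rcases Nat.lt_or_ge k 2 with h2 | h2
    · interval_cases k
      · simp [bernoulli_zero]
      · rw [bernoulli_one]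
        have h2n : ‖((2:ℕ) : ℚ_[p])‖ = 1 := norm_nat_unit_s17 (by omega) (by omega)
        have : ((((-1:ℚ)/2 : ℚ)) : ℚ_[p]) = -(1/((2:ℕ):ℚ_[p])) := by push_cast; ring
        rw [this, norm_neg, norm_div, h2n]
        simp
    · -- k ≥ 2
      have hkp : k + 1 ≤ p - 1 := by omega
      have hF := sum_range_pow p k
      rw [Finset.sum_range_succ] at hF
      have hk1 : ((k:ℚ) + 1) ≠ 0 := by positivity
      have hmain : bernoulli k * (p:ℚ) = (∑ i ∈ range p, (i:ℚ)^k)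
          - ∑ m ∈ range k, bernoulli m * ((k+1).choose m) * (p:ℚ)^(k+1-m)/((k:ℚ)+1) := by
        rw [hF, Nat.choose_succ_self_right, show k+1-k = 1 from by omega, pow_one]
        push_cast
        field_simp
        ring
      have hcast := congrArg (fun q : ℚ => (q : ℚ_[p])) hmain
      simp only [Rat.cast_mul, Rat.cast_sub, Rat.cast_sum, Rat.cast_div, Rat.cast_pow,
        Rat.cast_natCast, Rat.cast_add, Rat.cast_one] at hcast
      have hS : ‖∑ i ∈ range p, ((i:ℕ) : ℚ_[p])^k‖ ≤ (p:ℝ)⁻¹ := by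
        have h2p := hp.two_le
        have hknd : ¬ (p - 1 ∣ k) := by
          intro hd
          have hle := Nat.le_of_dvd (by omega) hd
          omega
        have hz := range_sum_zmod (p := p) k (by omega) hknd
        have hdvd : (p:ℤ) ∣ ((∑ i ∈ range p, i^k : ℕ) : ℤ) := by
          exact_mod_cast (ZMod.natCast_eq_zero_iff _ p).mp hz
        have := int_cong _ hdvd
        have hcast2 : (((∑ i ∈ range p, i^k : ℕ) : ℤ) : ℚ_[p])
            = ∑ i ∈ range p, ((i:ℕ) : ℚ_[p])^k := by push_cast; ring
        rwa [hcast2] at this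
      have hT : ‖∑ m ∈ range k, ((bernoulli m : ℚ) : ℚ_[p]) * ((k+1).choose m : ℕ)
          * ((p:ℕ) : ℚ_[p])^(k+1-m) / (((k:ℕ) : ℚ_[p])+1)‖ ≤ (p:ℝ)⁻¹ := by
        apply norm_sum_le_of _ _ _ (by positivity)
        intro m hm
        rw [mem_range] at hm
        have hknorm : ‖(((k:ℕ)) : ℚ_[p]) + 1‖ = 1 := by
          have : (((k:ℕ)) : ℚ_[p]) + 1 = (((k+1 : ℕ)) : ℚ_[p]) := by push_cast; ring
          rw [this]
          exact norm_nat_unit_s17 (by omega) (by omega)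
        rw [norm_div, norm_mul, norm_mul, norm_pow, Padic.norm_p, hknorm, div_one]
        have hb : ‖((bernoulli m : ℚ) : ℚ_[p])‖ ≤ 1 := ih m hm (by omega)
        have hc : ‖(((k+1).choose m : ℕ) : ℚ_[p])‖ ≤ 1 := by
          have := Padic.norm_int_le_one (p := p) ((k+1).choose m : ℤ)
          simpa using this
        have hinv1 : ((p:ℝ))⁻¹ ≤ 1 := by
          apply inv_le_one_of_one_le₀
          exact_mod_cast hp.one_lt.le
        have hpe : ((p:ℝ))⁻¹^(k+1-m) ≤ (p:ℝ)⁻¹ := by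
          calc ((p:ℝ))⁻¹^(k+1-m) ≤ ((p:ℝ))⁻¹^1 :=
              pow_le_pow_of_le_one (by positivity) hinv1 (by omega)
            _ = (p:ℝ)⁻¹ := pow_one _
        calc ‖((bernoulli m : ℚ) : ℚ_[p])‖ * ‖(((k+1).choose m : ℕ) : ℚ_[p])‖ * ((p:ℝ))⁻¹^(k+1-m)
            ≤ 1 * 1 * (p:ℝ)⁻¹ := by
              apply mul_le_mul (by
                apply mul_le_mul hb hc (norm_nonneg _) zero_le_one) hpe (by positivity) (by norm_num)
          _ = (p:ℝ)⁻¹ := by ring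
      have hfin : ‖((bernoulli k : ℚ) : ℚ_[p]) * ((p:ℕ) : ℚ_[p])‖ ≤ (p:ℝ)⁻¹ := by
        rw [hcast]
        have := Padic.nonarchimedean
          (∑ i ∈ range p, ((i:ℕ) : ℚ_[p])^k)
          (-(∑ m ∈ range k, ((bernoulli m : ℚ) : ℚ_[p]) * ((k+1).choose m : ℕ)
            * ((p:ℕ) : ℚ_[p])^(k+1-m) / (((k:ℕ) : ℚ_[p])+1)))
        rw [norm_neg] at this
        refine le_trans (le_trans (le_of_eq (by rw [sub_eq_add_neg])) this) (max_le hS hT)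
      rw [norm_mul, Padic.norm_p] at hfin
      calc ‖((bernoulli k : ℚ) : ℚ_[p])‖
          = ‖((bernoulli k : ℚ) : ℚ_[p])‖ * (p:ℝ)⁻¹ * p := by
            field_simp
        _ ≤ (p:ℝ)⁻¹ * p := by
            apply mul_le_mul_of_nonneg_right hfin (le_of_lt hppos)
        _ = 1 := by field_simp

def Dq (p u v : ℕ) : ℚ := ∑ l ∈ Icc 1 (p-1), ∑ j ∈ Ico 1 l, (j:ℚ)^v * (l:ℚ)^u

def Tq (p : ℕ) : ℚ := ∑ l ∈ Icc 1 (p-1), ∑ j ∈ Ico 1 l, ∑ i ∈ Ico 1 j,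
  (i:ℚ)^(p-3) * ((j:ℚ)^(p-3) * (l:ℚ)^(p-2))

lemma not_dvd_between {d e : ℕ} (hd : 0 < d) (h1 : d < e) (h2 : e < 2*d) : ¬ d ∣ e := by
  rintro ⟨c, rfl⟩
  rcases c with _ | _ | c
  · omega
  · omega
  · have h3 : d * 2 ≤ d * (c+1+1) := Nat.mul_le_mul_left d (by omega)
    omega

lemma D_expand (w u : ℕ) (hw : 1 ≤ w) (p : ℕ) :
    Dq p u w = ∑ m ∈ range (w+1),
      (bernoulli m * ((w+1).choose m) / ((w:ℚ)+1)) * Pq p ((w+1-m) + u) := by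
  unfold Dq Pq
  calc ∑ l ∈ Icc 1 (p-1), ∑ j ∈ Ico 1 l, (j:ℚ)^w * (l:ℚ)^u
      = ∑ l ∈ Icc 1 (p-1), (∑ j ∈ Ico 1 l, (j:ℚ)^w) * (l:ℚ)^u := by
        refine sum_congr rfl fun l _ => ?_
        rw [Finset.sum_mul]
    _ = ∑ l ∈ Icc 1 (p-1), ∑ m ∈ range (w+1),
          (bernoulli m * ((w+1).choose m) / ((w:ℚ)+1)) * (l:ℚ)^((w+1-m)+u) := by
        refine sum_congr rfl fun l _ => ?_
        rw [faulhaber' w l hw, Finset.sum_mul]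
        refine sum_congr rfl fun m _ => ?_
        rw [pow_add]
        ring
    _ = ∑ m ∈ range (w+1), ∑ l ∈ Icc 1 (p-1),
          (bernoulli m * ((w+1).choose m) / ((w:ℚ)+1)) * (l:ℚ)^((w+1-m)+u) := Finset.sum_comm
    _ = ∑ m ∈ range (w+1),
          (bernoulli m * ((w+1).choose m) / ((w:ℚ)+1)) * ∑ l ∈ Icc 1 (p-1), (l:ℚ)^((w+1-m)+u) := by
        refine sum_congr rfl fun m _ => ?_
        rw [Finset.mul_sum]

lemma TD_expand (m u : ℕ) (hm : 1 ≤ m) (p : ℕ) :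
    (∑ l ∈ Icc 1 (p-1), ∑ j ∈ Ico 1 l, ∑ i ∈ Ico 1 j, (i:ℚ)^m * ((j:ℚ)^m * (l:ℚ)^u))
      = ∑ k ∈ range (m+1),
        (bernoulli k * ((m+1).choose k) / ((m:ℚ)+1)) * Dq p u (m + (m+1-k)) := by
  unfold Dq
  calc ∑ l ∈ Icc 1 (p-1), ∑ j ∈ Ico 1 l, ∑ i ∈ Ico 1 j, (i:ℚ)^m * ((j:ℚ)^m * (l:ℚ)^u)
      = ∑ l ∈ Icc 1 (p-1), ∑ j ∈ Ico 1 l,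
          (∑ i ∈ Ico 1 j, (i:ℚ)^m) * ((j:ℚ)^m * (l:ℚ)^u) := by
        refine sum_congr rfl fun l _ => sum_congr rfl fun j _ => ?_
        rw [Finset.sum_mul]
    _ = ∑ l ∈ Icc 1 (p-1), ∑ j ∈ Ico 1 l, ∑ k ∈ range (m+1),
          (bernoulli k * ((m+1).choose k) / ((m:ℚ)+1)) * ((j:ℚ)^(m+(m+1-k)) * (l:ℚ)^u) := by
        refine sum_congr rfl fun l _ => sum_congr rfl fun j _ => ?_
        rw [faulhaber' m j hm, Finset.sum_mul]
        refine sum_congr rfl fun k _ => ?_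
        rw [pow_add]
        ring
    _ = ∑ l ∈ Icc 1 (p-1), ∑ k ∈ range (m+1), ∑ j ∈ Ico 1 l,
          (bernoulli k * ((m+1).choose k) / ((m:ℚ)+1)) * ((j:ℚ)^(m+(m+1-k)) * (l:ℚ)^u) := by
        refine sum_congr rfl fun l _ => ?_
        exact Finset.sum_comm
    _ = ∑ k ∈ range (m+1), ∑ l ∈ Icc 1 (p-1), ∑ j ∈ Ico 1 l,
          (bernoulli k * ((m+1).choose k) / ((m:ℚ)+1)) * ((j:ℚ)^(m+(m+1-k)) * (l:ℚ)^u) :=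
        Finset.sum_comm
    _ = ∑ k ∈ range (m+1),
          (bernoulli k * ((m+1).choose k) / ((m:ℚ)+1)) *
            ∑ l ∈ Icc 1 (p-1), ∑ j ∈ Ico 1 l, (j:ℚ)^(m+(m+1-k)) * (l:ℚ)^u := by
        refine sum_congr rfl fun k _ => ?_
        rw [Finset.mul_sum]
        refine sum_congr rfl fun l _ => ?_
        rw [Finset.mul_sum]

lemma nat_norm_le_one (c : ℕ) : ‖((c:ℕ) : ℚ_[p])‖ ≤ 1 := by
  have := Padic.norm_int_le_one (p := p) (c : ℤ)
  simpa using this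

lemma denom_norm_one {n : ℕ} (hn : n + 1 ≤ p - 1) : ‖(((n:ℕ) : ℚ_[p])) + 1‖ = 1 := by
  have : (((n:ℕ) : ℚ_[p])) + 1 = (((n+1 : ℕ)) : ℚ_[p]) := by push_cast; ring
  rw [this]
  exact norm_nat_unit_s17 (by omega) hn

lemma coeff_norm {k c n : ℕ} (hb : k ≤ p - 2) (hn : n + 1 ≤ p - 1) :
    ‖((bernoulli k : ℚ) : ℚ_[p]) * ((c:ℕ) : ℚ_[p]) / (((n:ℕ) : ℚ_[p])+1)‖ ≤ 1 := by
  rw [norm_div, norm_mul, denom_norm_one hn, div_one]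
  calc ‖((bernoulli k : ℚ) : ℚ_[p])‖ * ‖((c:ℕ) : ℚ_[p])‖ ≤ 1 * 1 :=
      mul_le_mul (bern_norm k hb) (nat_norm_le_one c) (norm_nonneg _) zero_le_one
    _ = 1 := by norm_num

lemma D_eval (hp7 : 7 ≤ p) (w : ℕ) (hw1 : 1 ≤ w) (hw2 : w ≤ p - 2) :
    ‖((Dq p (p-2) w : ℚ) : ℚ_[p]) + ((bernoulli w : ℚ) : ℚ_[p])‖ ≤ (p:ℝ)⁻¹ := by
  have hp := hfp.out
  have hε : (0:ℝ) ≤ (p:ℝ)⁻¹ := by positivity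
  have hcast : ((Dq p (p-2) w : ℚ) : ℚ_[p]) = ∑ m ∈ range (w+1),
      ((bernoulli m : ℚ) : ℚ_[p]) * (((w+1).choose m : ℕ) : ℚ_[p]) / (((w:ℕ) : ℚ_[p])+1)
        * ((Pq p ((w+1-m) + (p-2)) : ℚ) : ℚ_[p]) := by
    rw [D_expand w (p-2) hw1 p]
    simp only [Rat.cast_sum, Rat.cast_mul, Rat.cast_div, Rat.cast_natCast, Rat.cast_add,
      Rat.cast_one]
  rw [hcast, Finset.sum_range_succ]
  have hne : (((w : ℕ) : ℚ_[p]) + 1) ≠ 0 := by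
    intro h0
    have := denom_norm_one (p := p) (n := w) (by omega)
    rw [h0] at this
    simp at this
  have hchoose : (((w+1).choose w : ℕ) : ℚ_[p]) = ((w:ℕ) : ℚ_[p]) + 1 := by
    rw [Nat.choose_succ_self_right]
    push_cast
    ring
  have hexp : (w+1-w) + (p-2) = p-1 := by omega
  have hlast : ((bernoulli w : ℚ) : ℚ_[p]) * (((w+1).choose w : ℕ) : ℚ_[p]) / (((w:ℕ) : ℚ_[p])+1)
      * ((Pq p ((w+1-w) + (p-2)) : ℚ) : ℚ_[p]) + ((bernoulli w : ℚ) : ℚ_[p])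
      = ((bernoulli w : ℚ) : ℚ_[p]) * (((Pq p (p-1) : ℚ) : ℚ_[p]) + 1) := by
    rw [hchoose, hexp, mul_div_assoc, div_self hne]
    ring
  have hA : ‖∑ m ∈ range w, ((bernoulli m : ℚ) : ℚ_[p]) * (((w+1).choose m : ℕ) : ℚ_[p])
      / (((w:ℕ) : ℚ_[p])+1) * ((Pq p ((w+1-m) + (p-2)) : ℚ) : ℚ_[p])‖ ≤ (p:ℝ)⁻¹ := by
    apply norm_sum_le_of _ _ _ hε
    intro m hm
    rw [mem_range] at hm
    rw [norm_mul]
    have hc := coeff_norm (p := p) (k := m) (c := (w+1).choose m) (n := w) (by omega) (by omega)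
    have hP : ‖((Pq p ((w+1-m) + (p-2)) : ℚ) : ℚ_[p])‖ ≤ (p:ℝ)⁻¹ := by
      apply P_bound0 _ (by omega)
      apply not_dvd_between (by omega) (by omega) (by omega)
    calc ‖((bernoulli m : ℚ) : ℚ_[p]) * (((w+1).choose m : ℕ) : ℚ_[p]) / (((w:ℕ) : ℚ_[p])+1)‖
          * ‖((Pq p ((w+1-m) + (p-2)) : ℚ) : ℚ_[p])‖ ≤ 1 * (p:ℝ)⁻¹ :=
        mul_le_mul hc hP (norm_nonneg _) zero_le_one
      _ = (p:ℝ)⁻¹ := one_mul _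
  have hB : ‖((bernoulli w : ℚ) : ℚ_[p]) * (((Pq p (p-1) : ℚ) : ℚ_[p]) + 1)‖ ≤ (p:ℝ)⁻¹ := by
    rw [norm_mul]
    calc ‖((bernoulli w : ℚ) : ℚ_[p])‖ * ‖((Pq p (p-1) : ℚ) : ℚ_[p]) + 1‖ ≤ 1 * (p:ℝ)⁻¹ :=
        mul_le_mul (bern_norm w hw2) (P_bound1 (p-1) dvd_rfl) (norm_nonneg _) zero_le_one
      _ = (p:ℝ)⁻¹ := one_mul _
  calc ‖(∑ m ∈ range w, ((bernoulli m : ℚ) : ℚ_[p]) * (((w+1).choose m : ℕ) : ℚ_[p])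
      / (((w:ℕ) : ℚ_[p])+1) * ((Pq p ((w+1-m) + (p-2)) : ℚ) : ℚ_[p])
      + ((bernoulli w : ℚ) : ℚ_[p]) * (((w+1).choose w : ℕ) : ℚ_[p]) / (((w:ℕ) : ℚ_[p])+1)
      * ((Pq p ((w+1-w) + (p-2)) : ℚ) : ℚ_[p])) + ((bernoulli w : ℚ) : ℚ_[p])‖
      = ‖∑ m ∈ range w, ((bernoulli m : ℚ) : ℚ_[p]) * (((w+1).choose m : ℕ) : ℚ_[p])
      / (((w:ℕ) : ℚ_[p])+1) * ((Pq p ((w+1-m) + (p-2)) : ℚ) : ℚ_[p])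
      + ((bernoulli w : ℚ) : ℚ_[p]) * (((Pq p (p-1) : ℚ) : ℚ_[p]) + 1)‖ := by
        rw [add_assoc, hlast]
    _ ≤ max (p:ℝ)⁻¹ (p:ℝ)⁻¹ := le_trans (Padic.nonarchimedean _ _)
        (max_le_max hA hB)
    _ = (p:ℝ)⁻¹ := max_self _

lemma D_reduce (hp7 : 7 ≤ p) (v w : ℕ) (hvw : v = w + (p-1)) :
    ‖((Dq p (p-2) v : ℚ) : ℚ_[p]) - ((Dq p (p-2) w : ℚ) : ℚ_[p])‖ ≤ (p:ℝ)⁻¹ := by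
  have hε : (0:ℝ) ≤ (p:ℝ)⁻¹ := by positivity
  unfold Dq
  simp only [Rat.cast_sum, Rat.cast_mul, Rat.cast_pow, Rat.cast_natCast]
  apply cong_sum _ _ _ hε
  intro l hl
  apply cong_sum _ _ _ hε
  intro j hj
  rw [mem_Icc] at hl
  rw [mem_Ico] at hj
  have hj1 : 1 ≤ j := hj.1
  have hj2 : j ≤ p - 1 := by omega
  have key : ((j:ℕ) : ℚ_[p])^v * ((l:ℕ) : ℚ_[p])^(p-2) - ((j:ℕ) : ℚ_[p])^w * ((l:ℕ) : ℚ_[p])^(p-2)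
      = (((j:ℕ) : ℚ_[p])^w * ((l:ℕ) : ℚ_[p])^(p-2)) * (((j:ℕ) : ℚ_[p])^(p-1) - 1) := by
    rw [hvw, pow_add]
    ring
  rw [key, norm_mul, norm_mul, norm_nat_pow_unit hj1 hj2, norm_nat_pow_unit hl.1 hl.2,
    one_mul, one_mul]
  exact fermat_pow hj1 hj2

lemma bernoulli_odd_zero {k : ℕ} (hk : k % 2 = 1) (hk1 : k ≠ 1) : bernoulli k = 0 := by
  rw [bernoulli_eq_bernoulli'_of_ne_one hk1]
  exact bernoulli'_eq_zero_of_odd (Nat.odd_iff.mpr hk) (by omega)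

lemma T_cong (hp7 : 7 ≤ p) :
    ‖((Tq p : ℚ) : ℚ_[p]) - (3/2) * ((bernoulli (p-5) : ℚ) : ℚ_[p])‖ ≤ (p:ℝ)⁻¹ := by
  have hp := hfp.out
  have hodd : p % 2 = 1 := Nat.odd_iff.mp (hp.odd_of_ne_two (by omega))
  have hε : (0:ℝ) ≤ (p:ℝ)⁻¹ := by positivity
  have h2norm : ‖((2:ℕ) : ℚ_[p])‖ = 1 := norm_nat_unit_s17 (by omega) (by omega)
  have hb1 : ((bernoulli 1 : ℚ) : ℚ_[p]) = -(((2:ℕ) : ℚ_[p]))⁻¹ := by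
    rw [bernoulli_one]
    push_cast
    norm_num
  have hcast : ((Tq p : ℚ) : ℚ_[p]) = ∑ k ∈ range ((p-3)+1),
      (((bernoulli k : ℚ):ℚ_[p]) * ((((p-3)+1).choose k : ℕ):ℚ_[p]) / ((((p-3):ℕ):ℚ_[p])+1))
      * ((Dq p (p-2) ((p-3) + ((p-3)+1-k)) : ℚ) : ℚ_[p]) := by
    unfold Tq
    rw [TD_expand (p-3) (p-2) (by omega) p]
    simp only [Rat.cast_sum, Rat.cast_mul, Rat.cast_div, Rat.cast_natCast, Rat.cast_add,
      Rat.cast_one]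
  have hsplit : (3/2) * ((bernoulli (p-5) : ℚ) : ℚ_[p]) = ∑ k ∈ range ((p-3)+1),
      ((if k = 1 then (((2:ℕ) : ℚ_[p]))⁻¹ * ((bernoulli (p-5) : ℚ) : ℚ_[p]) else 0)
        + (if k = p-5 then ((bernoulli (p-5) : ℚ) : ℚ_[p]) else 0)) := by
    rw [Finset.sum_add_distrib, Finset.sum_ite_eq' (range ((p-3)+1)) 1,
      Finset.sum_ite_eq' (range ((p-3)+1)) (p-5), if_pos (by rw [mem_range]; omega),
      if_pos (by rw [mem_range]; omega)]
    have h2 : (((2:ℕ) : ℚ_[p])) ≠ 0 := by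
      intro h0
      rw [h0] at h2norm
      simp at h2norm
    field_simp
    ring
  rw [hcast, hsplit]
  apply cong_sum _ _ _ hε
  intro k hk
  rw [mem_range] at hk
  by_cases hk1 : k = 1
  · subst hk1
    rw [if_pos rfl, if_neg (by omega)]
    have hchoose : ((((p-3)+1).choose 1 : ℕ):ℚ_[p]) = (((p-3):ℕ):ℚ_[p])+1 := by
      rw [Nat.choose_one_right]
      push_cast
      ring
    have hne : ((((p-3):ℕ):ℚ_[p])+1) ≠ 0 := by
      intro h0
      have := denom_norm_one (p := p) (n := p-3) (by omega)
      rw [h0] at this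
      simp at this
    have hC : (((bernoulli 1 : ℚ):ℚ_[p]) * ((((p-3)+1).choose 1 : ℕ):ℚ_[p])
        / ((((p-3):ℕ):ℚ_[p])+1)) = -(((2:ℕ) : ℚ_[p]))⁻¹ := by
      rw [hchoose, mul_div_assoc, div_self hne, mul_one, hb1]
    rw [hC]
    have hkey : -(((2:ℕ) : ℚ_[p]))⁻¹ * ((Dq p (p-2) ((p-3) + ((p-3)+1-1)) : ℚ) : ℚ_[p])
        - ((((2:ℕ) : ℚ_[p]))⁻¹ * ((bernoulli (p-5) : ℚ) : ℚ_[p]) + 0)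
        = -((((2:ℕ) : ℚ_[p]))⁻¹) * (((Dq p (p-2) ((p-3) + ((p-3)+1-1)) : ℚ) : ℚ_[p])
            + ((bernoulli (p-5) : ℚ) : ℚ_[p])) := by ring
    rw [hkey, norm_mul, norm_neg, norm_inv, h2norm, inv_one, one_mul]
    have hred := D_reduce hp7 ((p-3) + ((p-3)+1-1)) (p-5) (by omega)
    have heval := D_eval hp7 (p-5) (by omega) (by omega)
    calc ‖((Dq p (p-2) ((p-3) + ((p-3)+1-1)) : ℚ) : ℚ_[p]) + ((bernoulli (p-5) : ℚ) : ℚ_[p])‖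
        = ‖(((Dq p (p-2) ((p-3) + ((p-3)+1-1)) : ℚ) : ℚ_[p]) - ((Dq p (p-2) (p-5) : ℚ) : ℚ_[p]))
          + (((Dq p (p-2) (p-5) : ℚ) : ℚ_[p]) + ((bernoulli (p-5) : ℚ) : ℚ_[p]))‖ := by ring_nf
      _ ≤ max (p:ℝ)⁻¹ (p:ℝ)⁻¹ := le_trans (Padic.nonarchimedean _ _) (max_le_max hred heval)
      _ = (p:ℝ)⁻¹ := max_self _
  · by_cases hk5 : k = p-5
    · subst hk5
      rw [if_neg hk1, if_pos rfl]
      -- term: C * D ≡ B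
      set C : ℚ_[p] := (((bernoulli (p-5) : ℚ):ℚ_[p]) * ((((p-3)+1).choose (p-5) : ℕ):ℚ_[p])
        / ((((p-3):ℕ):ℚ_[p])+1)) with hCdef
      set D : ℚ_[p] := ((Dq p (p-2) ((p-3) + ((p-3)+1-(p-5))) : ℚ) : ℚ_[p]) with hDdef
      have hCnorm : ‖C‖ ≤ 1 := coeff_norm (by omega) (by omega)
      have hD12 : ‖D + ((bernoulli 1 : ℚ) : ℚ_[p])‖ ≤ (p:ℝ)⁻¹ := by
        have hred := D_reduce hp7 ((p-3) + ((p-3)+1-(p-5))) 1 (by omega)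
        have heval := D_eval hp7 1 (by omega) (by omega)
        calc ‖D + ((bernoulli 1 : ℚ) : ℚ_[p])‖
            = ‖(D - ((Dq p (p-2) 1 : ℚ) : ℚ_[p]))
              + (((Dq p (p-2) 1 : ℚ) : ℚ_[p]) + ((bernoulli 1 : ℚ) : ℚ_[p]))‖ := by ring_nf
          _ ≤ max (p:ℝ)⁻¹ (p:ℝ)⁻¹ :=
              le_trans (Padic.nonarchimedean _ _) (max_le_max hred heval)
          _ = (p:ℝ)⁻¹ := max_self _
      -- second piece : C * (2⁻¹) - B has small norm
      have hz : ∃ z : ℤ, (p:ℤ) ∣ z ∧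
          (((((p-3)+1).choose (p-5) : ℕ):ℚ_[p]))
            = (z : ℚ_[p]) + ((2:ℕ) : ℚ_[p]) * ((((p-3):ℕ):ℚ_[p])+1) := by
        refine ⟨((((p-3)+1).choose (p-5) : ℕ) : ℤ) - 2*(((p-2):ℕ) : ℤ), ?_, ?_⟩
        · obtain ⟨q, rfl⟩ : ∃ q, p = q + 7 := ⟨p - 7, by omega⟩
          have hch : (q+5).choose 3 * 6 = (q+3)*((q+4)*(q+5)) := by
            have hd := Nat.descFactorial_eq_factorial_mul_choose (q+5) 3
            simp [Nat.descFactorial, Nat.factorial] at hd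
            omega
          have hsym : ((q+7)-3+1).choose ((q+7)-5) = (q+5).choose 3 := by
            have h1 : (q+7)-3+1 = q+5 := by omega
            have h2 : (q+7)-5 = q+2 := by omega
            rw [h1, h2]
            have := Nat.choose_symm (n := q+5) (k := 3) (by omega)
            rw [show (q+5)-3 = q+2 by omega] at this
            exact this
          rw [hsym, show (q+7)-2 = q+5 by omega]
          have hchz : (((q+5).choose 3 : ℕ) : ℤ) * 6 = ((q:ℤ)+3)*(((q:ℤ)+4)*((q:ℤ)+5)) := by
            exact_mod_cast congrArg (fun n : ℕ => (n : ℤ)) hch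
          have h6z : ((((q+5).choose 3 : ℕ) : ℤ) - 2*(((q+5):ℕ) : ℤ)) * 6
              = ((q:ℤ)+7) * ((q:ℤ) * ((q:ℤ)+5)) := by
            push_cast
            push_cast at hchz
            linear_combination hchz
          have hpz : Prime ((q+7 : ℕ) : ℤ) := Nat.prime_iff_prime_int.mp hp
          have hdvd6 : ((q+7 : ℕ) : ℤ) ∣ ((((q+5).choose 3 : ℕ) : ℤ) - 2*(((q+5):ℕ) : ℤ)) * 6 := by
            rw [h6z]
            push_cast
            exact Dvd.intro _ rfl
          rcases (hpz.dvd_mul).mp hdvd6 with h | h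
          · exact_mod_cast h
          · exfalso
            have := Int.le_of_dvd (by norm_num) h
            push_cast at this
            omega
        · push_cast
          have h1 : (((p-2):ℕ) : ℚ_[p]) = (((p-3):ℕ):ℚ_[p])+1 := by
            rw [show (p-2) = (p-3)+1 by omega]
            push_cast
            ring
          push_cast at h1
          rw [h1]
          ring
      obtain ⟨z, hzd, hzc⟩ := hz
      have hkey : C * D - (0 + ((bernoulli (p-5) : ℚ) : ℚ_[p]))
          = C * (D + ((bernoulli 1 : ℚ) : ℚ_[p]))
            + (C * (-((bernoulli 1 : ℚ) : ℚ_[p])) - ((bernoulli (p-5) : ℚ) : ℚ_[p])) := by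
        ring
      rw [hkey]
      refine le_trans (Padic.nonarchimedean _ _) (max_le ?_ ?_)
      · rw [norm_mul]
        calc ‖C‖ * ‖D + ((bernoulli 1 : ℚ) : ℚ_[p])‖ ≤ 1 * (p:ℝ)⁻¹ :=
            mul_le_mul hCnorm hD12 (norm_nonneg _) zero_le_one
          _ = (p:ℝ)⁻¹ := one_mul _
      · have hne : ((((p-3):ℕ):ℚ_[p])+1) ≠ 0 := by
          intro h0
          have := denom_norm_one (p := p) (n := p-3) (by omega)
          rw [h0] at this
          simp at this
        have h2 : (((2:ℕ) : ℚ_[p])) ≠ 0 := by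
          intro h0
          rw [h0] at h2norm
          simp at h2norm
        have hsecond : C * (-((bernoulli 1 : ℚ) : ℚ_[p])) - ((bernoulli (p-5) : ℚ) : ℚ_[p])
            = ((bernoulli (p-5) : ℚ) : ℚ_[p])
              * ((z:ℤ) : ℚ_[p]) / (((2:ℕ) : ℚ_[p]) * ((((p-3):ℕ):ℚ_[p])+1)) := by
          rw [hb1, hCdef, hzc]
          field_simp
          ring
        rw [hsecond, norm_div, norm_mul, norm_mul, h2norm, denom_norm_one (by omega), one_mul,
          div_one]
        calc ‖((bernoulli (p-5) : ℚ) : ℚ_[p])‖ * ‖((z:ℤ) : ℚ_[p])‖ ≤ 1 * (p:ℝ)⁻¹ :=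
            mul_le_mul (bern_norm _ (by omega)) (int_cong z hzd) (norm_nonneg _) zero_le_one
          _ = (p:ℝ)⁻¹ := one_mul _
    · -- k ∉ {1, p-5} : term ≡ 0
      rw [if_neg hk1, if_neg hk5, add_zero]
      by_cases hko : k % 2 = 1
      · -- odd k, k ≠ 1 : bernoulli k = 0
        rw [bernoulli_odd_zero hko hk1]
        simp
      · -- even k
        have hCnorm : ‖(((bernoulli k : ℚ):ℚ_[p]) * ((((p-3)+1).choose k : ℕ):ℚ_[p])
            / ((((p-3):ℕ):ℚ_[p])+1))‖ ≤ 1 := coeff_norm (by omega) (by omega)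
        have hDnorm : ‖((Dq p (p-2) ((p-3) + ((p-3)+1-k)) : ℚ) : ℚ_[p])‖ ≤ (p:ℝ)⁻¹ := by
          by_cases hk3 : k = p-3
          · subst hk3
            have heval := D_eval hp7 ((p-3)+1) (by omega) (by omega)
            rw [bernoulli_odd_zero (by omega) (by omega)] at heval
            rw [show (p-3) + ((p-3)+1-(p-3)) = (p-3)+1 by omega]
            simpa using heval
          · -- k ≤ p-6, reduce to w = p-4-k which is odd
            have hk6 : k ≤ p - 6 := by omega
            have hred := D_reduce hp7 ((p-3) + ((p-3)+1-k)) (p-4-k) (by omega)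
            have heval := D_eval hp7 (p-4-k) (by omega) (by omega)
            rw [bernoulli_odd_zero (by omega) (by omega)] at heval
            rw [Rat.cast_zero, add_zero] at heval
            calc ‖((Dq p (p-2) ((p-3) + ((p-3)+1-k)) : ℚ) : ℚ_[p])‖
                = ‖(((Dq p (p-2) ((p-3) + ((p-3)+1-k)) : ℚ) : ℚ_[p])
                    - ((Dq p (p-2) (p-4-k) : ℚ) : ℚ_[p]))
                  + ((Dq p (p-2) (p-4-k) : ℚ) : ℚ_[p])‖ := by ring_nf
              _ ≤ max (p:ℝ)⁻¹ (p:ℝ)⁻¹ :=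
                  le_trans (Padic.nonarchimedean _ _) (max_le_max hred heval)
              _ = (p:ℝ)⁻¹ := max_self _
        rw [sub_zero, norm_mul]
        calc ‖(((bernoulli k : ℚ):ℚ_[p]) * ((((p-3)+1).choose k : ℕ):ℚ_[p])
            / ((((p-3):ℕ):ℚ_[p])+1))‖ * ‖((Dq p (p-2) ((p-3) + ((p-3)+1-k)) : ℚ) : ℚ_[p])‖
            ≤ 1 * (p:ℝ)⁻¹ := mul_le_mul hCnorm hDnorm (norm_nonneg _) zero_le_one
          _ = (p:ℝ)⁻¹ := one_mul _

lemma norm_inv_pow_le_one {j a : ℕ} (h1 : 1 ≤ j) (h2 : j ≤ p - 1) :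
    ‖1 / ((j : ℚ_[p]))^a‖ ≤ 1 := by
  rw [one_div, norm_inv, norm_nat_pow_unit h1 h2, inv_one]

lemma H_cong_T (hp7 : 7 ≤ p) :
    ‖((mhs3 2 2 1 (p-1) : ℚ) : ℚ_[p]) - ((Tq p : ℚ) : ℚ_[p])‖ ≤ (p:ℝ)⁻¹ := by
  have hε : (0:ℝ) ≤ (p:ℝ)⁻¹ := by positivity
  unfold mhs3 Tq
  simp only [Rat.cast_sum, Rat.cast_mul, Rat.cast_pow, Rat.cast_natCast, Rat.cast_div,
    Rat.cast_one]
  apply cong_sum _ _ _ hε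
  intro l hl
  apply cong_sum _ _ _ hε
  intro j hj
  apply cong_sum _ _ _ hε
  intro i hi
  rw [mem_Icc] at hl
  rw [mem_Ico] at hj
  rw [mem_Ico] at hi
  have hl1 := hl.1
  have hl2 := hl.2
  have hj1 : 1 ≤ j := hj.1
  have hj2 : j ≤ p - 1 := by omega
  have hi1 : 1 ≤ i := hi.1
  have hi2 : i ≤ p - 1 := by omega
  have h1 : ‖1/((i : ℚ_[p]))^2 - ((i : ℚ_[p]))^(p-3)‖ ≤ (p:ℝ)⁻¹ := by
    have := inv_pow_cong (p := p) (j := i) (a := 2) hi1 hi2 (by omega)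
    rwa [show p-1-2 = p-3 by omega] at this
  have h2 : ‖1/((j : ℚ_[p]))^2 - ((j : ℚ_[p]))^(p-3)‖ ≤ (p:ℝ)⁻¹ := by
    have := inv_pow_cong (p := p) (j := j) (a := 2) hj1 hj2 (by omega)
    rwa [show p-1-2 = p-3 by omega] at this
  have h3 : ‖1/((l : ℚ_[p]))^1 - ((l : ℚ_[p]))^(p-2)‖ ≤ (p:ℝ)⁻¹ := by
    have := inv_pow_cong (p := p) (j := l) (a := 1) hl1 hl2 (by omega)
    rwa [show p-1-1 = p-2 by omega] at this
  have step1 : ‖(1/((i : ℚ_[p]))^2 * (1/((j : ℚ_[p]))^2))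
      - ((i : ℚ_[p]))^(p-3) * ((j : ℚ_[p]))^(p-3)‖ ≤ (p:ℝ)⁻¹ := by
    apply cong_mul hε h1 h2
    · rw [norm_nat_pow_unit hi1 hi2]
    · exact norm_inv_pow_le_one hj1 hj2
  have step2 : ‖((1/((i : ℚ_[p]))^2 * (1/((j : ℚ_[p]))^2)) * (1/((l : ℚ_[p]))^1))
      - (((i : ℚ_[p]))^(p-3) * ((j : ℚ_[p]))^(p-3)) * ((l : ℚ_[p]))^(p-2)‖ ≤ (p:ℝ)⁻¹ := by
    apply cong_mul hε step1 h3
    · rw [norm_mul, norm_nat_pow_unit hi1 hi2, norm_nat_pow_unit hj1 hj2, one_mul]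
    · exact norm_inv_pow_le_one hl1 hl2
  have hrw1 : (1/((i : ℚ_[p]))^2 * (1/((j : ℚ_[p]))^2)) * (1/((l : ℚ_[p]))^1)
      = 1/(((i : ℚ_[p]))^2 * ((j : ℚ_[p]))^2 * ((l : ℚ_[p]))^1) := by
    rw [div_mul_div_comm, div_mul_div_comm, one_mul, one_mul]
  have hrw2 : (((i : ℚ_[p]))^(p-3) * ((j : ℚ_[p]))^(p-3)) * ((l : ℚ_[p]))^(p-2)
      = ((i : ℚ_[p]))^(p-3) * (((j : ℚ_[p]))^(p-3) * ((l : ℚ_[p]))^(p-2)) := mul_assoc _ _ _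
  rw [hrw1, hrw2] at step2
  exact step2

lemma S2_bound (hp7 : 7 ≤ p) : ‖((hsum 2 (p-1) : ℚ) : ℚ_[p])‖ ≤ (p:ℝ)⁻¹ := by
  have hε : (0:ℝ) ≤ (p:ℝ)⁻¹ := by positivity
  have hcong : ‖((hsum 2 (p-1) : ℚ) : ℚ_[p]) - ((Pq p (p-3) : ℚ) : ℚ_[p])‖ ≤ (p:ℝ)⁻¹ := by
    unfold hsum Pq
    simp only [Rat.cast_sum, Rat.cast_div, Rat.cast_one, Rat.cast_pow, Rat.cast_natCast]
    apply cong_sum _ _ _ hε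
    intro k hk
    rw [mem_Icc] at hk
    have := inv_pow_cong (p := p) (j := k) (a := 2) hk.1 hk.2 (by omega)
    rwa [show p-1-2 = p-3 by omega] at this
  have hP : ‖((Pq p (p-3) : ℚ) : ℚ_[p])‖ ≤ (p:ℝ)⁻¹ := by
    apply P_bound0 _ (by omega)
    intro hd
    have := Nat.le_of_dvd (by omega) hd
    omega
  calc ‖((hsum 2 (p-1) : ℚ) : ℚ_[p])‖
      = ‖(((hsum 2 (p-1) : ℚ) : ℚ_[p]) - ((Pq p (p-3) : ℚ) : ℚ_[p]))
        + ((Pq p (p-3) : ℚ) : ℚ_[p])‖ := by ring_nf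
    _ ≤ max (p:ℝ)⁻¹ (p:ℝ)⁻¹ := le_trans (Padic.nonarchimedean _ _) (max_le_max hcong hP)
    _ = (p:ℝ)⁻¹ := max_self _


theorem stmt17 (p : ℕ) [Fact p.Prime] (hp : 7 ≤ p) :
    padicCongr p 1 (∑ k ∈ Finset.range p, mhs2 2 2 k / ((k : ℚ) + 1))
      (3 / 2 * bernoulli (p - 5) - hsum 4 (p - 1) / (2 * (p : ℚ))) := by
  have hprime := (Fact.out : p.Prime)
  have hp0 : (p:ℚ) ≠ 0 := by
    exact_mod_cast hprime.pos.ne'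
  have hp0R : (0:ℝ) < p := by exact_mod_cast hprime.pos
  have hε : (0:ℝ) ≤ (p:ℝ)⁻¹ := by positivity
  -- step 1 : rational identity
  have hL : ∑ k ∈ Finset.range p, mhs2 2 2 k / ((k : ℚ) + 1)
      = mhs3 2 2 1 (p-1) + mhs2 2 2 (p-1) / ((p:ℕ):ℚ) := by
    rw [lhs_eq p]
    have h := mhs3_succ 2 2 1 (p-1)
    rw [show (p-1)+1 = p by omega] at h
    rw [h, pow_one]
  have hdiag := mhs2_diag (p-1)
  have hQ : (∑ k ∈ Finset.range p, mhs2 2 2 k / ((k : ℚ) + 1))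
      - (3 / 2 * bernoulli (p - 5) - hsum 4 (p - 1) / (2 * (p : ℚ)))
      = (mhs3 2 2 1 (p-1) - 3/2 * bernoulli (p-5)) + (hsum 2 (p-1))^2 / (2*(p:ℚ)) := by
    rw [hL]
    push_cast
    field_simp
    linear_combination hdiag
  unfold padicCongr
  rw [hQ]
  rw [show ((p:ℝ))^(-(1:ℤ)) = (p:ℝ)⁻¹ by rw [zpow_neg, zpow_one]]
  rw [Rat.cast_add]
  refine le_trans (Padic.nonarchimedean _ _) (max_le ?_ ?_)
  · -- main term
    have h1 := H_cong_T (p := p) hp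
    have h2 := T_cong (p := p) hp
    have hsub : ((mhs3 2 2 1 (p-1) - 3/2 * bernoulli (p-5) : ℚ) : ℚ_[p])
        = (((mhs3 2 2 1 (p-1) : ℚ) : ℚ_[p]) - ((Tq p : ℚ) : ℚ_[p]))
          + (((Tq p : ℚ) : ℚ_[p]) - (3/2) * ((bernoulli (p-5) : ℚ) : ℚ_[p])) := by
      push_cast
      ring
    rw [hsub]
    exact le_trans (Padic.nonarchimedean _ _) (max_le h1 h2)
  · -- error term
    have hS2 := S2_bound (p := p) hp
    have hcast : (((hsum 2 (p-1))^2 / (2*(p:ℚ)) : ℚ) : ℚ_[p])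
        = ((hsum 2 (p-1) : ℚ) : ℚ_[p])^2 / ((2 : ℚ_[p]) * ((p:ℕ) : ℚ_[p])) := by
      push_cast
      ring
    rw [hcast, norm_div, norm_mul, Padic.norm_p]
    have h2n : ‖(2 : ℚ_[p])‖ = 1 := by
      have := norm_nat_unit_s17 (p := p) (j := 2) (by omega) (by omega)
      simpa using this
    rw [h2n, one_mul, norm_pow]
    rw [div_le_iff₀ (by positivity)]
    calc ‖((hsum 2 (p-1) : ℚ) : ℚ_[p])‖^2 ≤ ((p:ℝ)⁻¹)^2 :=
        pow_le_pow_left₀ (norm_nonneg _) hS2 2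
      _ = (p:ℝ)⁻¹ * (p:ℝ)⁻¹ := sq _
end
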